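/- arXiv:1503.00971 — 7 statements merged into one kernel-verified Lean document; each statement's English description precedes it below -/
import Mathlib

section
/- For nonnegative integers a, b, c, the number of lozenge tilings of a hexagon with side lengths a, b, c, a, b, c (equivalently, plane partitions in an a×b×c box) equals H(a)H(b)H(c)H(a+b+c)/(H(a+b)H(a+c)H(b+c)), where H(n) = ∏_{k=1}^n (k-1)!. -/
/-- `H(n) = ∏_{k=1}^n (k-1)!`. -/
def hyperH (n : ℕ) : ℕ := ∏ k ∈ Finset.range n, Nat.factorial k

/-!
Column `j` of a plane partition `π` in an `a × b × c` box is encoded by the strictly decreasing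
sequence `π i j + a - i`, the times at which a lattice path from height `a` down to `0` takes its
`a` down-steps among `a + c` steps. Shifting path `j` down by `j`, the inequalities between
neighbouring columns say exactly that the `b` paths never meet. Walkers moving in lock-step are
counted by a Lindström–Gessel–Viennot determinant: expanding `det (binom(n + 1, s j - e k))`
multilinearly over the first step of every walker, the non-strictly ordered configurations produce
two equal rows. Here this gives `det (binom(a + c, a + k - j))`; the Pascal matrix turns it into
`det (binom(a + c + j, a + k))`, which after pulling out factorials is a Vandermonde determinant in
the falling factorials `(c + j).descFactorial k`.
-/

namespace MacMahon

open Finset Matrix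
open scoped Nat

def chooseZ (n : ℕ) (k : ℤ) : ℕ := if 0 ≤ k then n.choose k.toNat else 0

@[simp]
lemma chooseZ_natCast (n m : ℕ) : chooseZ n m = n.choose m := by
  simp [chooseZ]

lemma chooseZ_of_neg (n : ℕ) {k : ℤ} (hk : k < 0) : chooseZ n k = 0 := by
  simp [chooseZ, hk.not_ge]

lemma chooseZ_zero_left (k : ℤ) : chooseZ 0 k = if k = 0 then 1 else 0 := by
  rcases lt_or_ge k 0 with hk | hk
  · simp [chooseZ_of_neg 0 hk, hk.ne]
  · lift k to ℕ using hk
    cases k with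
    | zero => simp [chooseZ]
    | succ k => rw [chooseZ_natCast, Nat.choose_zero_succ, if_neg (by omega)]

lemma chooseZ_succ_left (n : ℕ) (k : ℤ) :
    chooseZ (n + 1) k = chooseZ n k + chooseZ n (k - 1) := by
  rcases lt_or_ge k 0 with hk | hk
  · simp [chooseZ_of_neg _ hk, chooseZ_of_neg _ (show k - 1 < 0 by omega)]
  · lift k to ℕ using hk
    cases k with
    | zero =>
      rw [chooseZ_of_neg n (show ((0 : ℕ) : ℤ) - 1 < 0 by omega), chooseZ_natCast,
        chooseZ_natCast]
      simp
    | succ k =>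
      rw [show ((k + 1 : ℕ) : ℤ) - 1 = k by push_cast; ring]
      simp only [chooseZ_natCast, Nat.choose_succ_succ', add_comm]

lemma sum_choose_mul_chooseZ (m n : ℕ) (k : ℤ) :
    ∑ s ∈ range (n + 1), n.choose s * chooseZ m (k - s) = chooseZ (m + n) k := by
  induction n generalizing k with
  | zero => simp
  | succ n ih =>
    rw [← add_assoc, chooseZ_succ_left, ← ih, ← ih, sum_range_succ' _ (n + 1)]
    simp only [Nat.choose_succ_succ', add_mul, sum_add_distrib]
    rw [sum_range_succ (fun i => n.choose (i + 1) * _) n, Nat.choose_succ_self, zero_mul, add_zero,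
      sum_range_succ' (fun s => n.choose s * chooseZ m (k - s)) n]
    simp only [Nat.cast_succ, sub_sub, Nat.choose_zero_right, Nat.cast_zero, add_comm (1 : ℤ)]
    ring

section Walks

variable {b : ℕ}

lemma det_ite_eq_of_strictAnti {R : Type*} [CommRing R] {s e : Fin b → ℤ}
    (hs : StrictAnti s) (he : StrictAnti e) :
    (of fun j k => if s j = e k then (1 : R) else 0).det = if s = e then 1 else 0 := by
  rw [det_apply', sum_eq_single 1]
  · simp [prod_boole, funext_iff]
  · intro σ _ hσ
    -- a nonzero term forces `s ∘ σ = e`, so `σ` is monotone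
    suffices ∃ i, s (σ i) ≠ e i by
      obtain ⟨i, hi⟩ := this
      rw [prod_eq_zero (mem_univ i) (by simp [hi]), mul_zero]
    by_contra! h
    have hmono : StrictMono σ := fun i i' hii' => hs.lt_iff_gt.1 (by rw [h, h]; exact he hii')
    exact hσ (Equiv.ext fun i => congr_fun (hmono.range_inj strictMono_id |>.1
      (by simp [Set.range_eq_univ.2 σ.surjective])) i)
  · simp

def nextPositions (x : Fin b → ℤ) : Finset (Fin b → ℤ) :=
  Fintype.piFinset fun j => {x j, x j - 1}

lemma mem_nextPositions {x y : Fin b → ℤ} :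
    y ∈ nextPositions x ↔ ∀ j, y j = x j ∨ y j = x j - 1 := by
  simp [nextPositions]

lemma antitone_of_mem_nextPositions {x y : Fin b → ℤ} (hx : StrictAnti x)
    (hy : y ∈ nextPositions x) : Antitone y := by
  intro j j' hjj'
  rw [mem_nextPositions] at hy
  rcases hjj'.lt_or_eq with hlt | rfl
  · have := hx hlt
    rcases hy j with h | h <;> rcases hy j' with h' | h' <;> omega
  · rfl

/-- Families of `b` nonintersecting lattice paths, recorded as the positions of `b` particles
at the times `0, …, n`. -/
@[ext]
structure NonintersectingWalks (b n : ℕ) (s e : Fin b → ℤ) where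
  pos : Fin (n + 1) → Fin b → ℤ
  pos_zero : pos 0 = s
  pos_last : pos (Fin.last n) = e
  strictAnti_pos : ∀ t, StrictAnti (pos t)
  pos_succ_mem : ∀ t : Fin n, pos t.succ ∈ nextPositions (pos t.castSucc)

namespace NonintersectingWalks

variable {n : ℕ} {s e : Fin b → ℤ}

lemma antitone_pos (w : NonintersectingWalks b n s e) (j : Fin b) :
    Antitone fun t => w.pos t j := by
  cases n with
  | zero => exact fun t t' _ => by rw [Fin.fin_one_eq_zero t, Fin.fin_one_eq_zero t']
  | succ n =>
    refine Fin.antitone_iff_succ_le.2 fun t => ?_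
    rcases mem_nextPositions.1 (w.pos_succ_mem t) j with h | h <;> omega

lemma pos_mem_Icc (w : NonintersectingWalks b n s e) (t : Fin (n + 1)) (j : Fin b) :
    w.pos t j ∈ Set.Icc (e j) (s j) := by
  have h0 := w.antitone_pos j (Fin.zero_le t)
  have hl := w.antitone_pos j (Fin.le_last t)
  simp only [w.pos_zero, w.pos_last] at h0 hl
  exact ⟨hl, h0⟩

instance : Finite (NonintersectingWalks b n s e) :=
  Finite.of_injective (fun w t j => (⟨w.pos t j, w.pos_mem_Icc t j⟩ : Set.Icc (e j) (s j)))
    fun w w' h => by ext t j; exact congrArg Subtype.val (congr_fun (congr_fun h t) j)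

lemma strictAnti_start (w : NonintersectingWalks b n s e) : StrictAnti s :=
  w.pos_zero ▸ w.strictAnti_pos 0

lemma card_eq_zero_of_not_strictAnti (hs : ¬ StrictAnti s) :
    Nat.card (NonintersectingWalks b n s e) = 0 :=
  have : IsEmpty (NonintersectingWalks b n s e) := ⟨fun w => hs w.strictAnti_start⟩
  Nat.card_of_isEmpty

lemma card_zero (hs : StrictAnti s) :
    Nat.card (NonintersectingWalks b 0 s e) = if s = e then 1 else 0 := by
  split_ifs with hse
  · subst hse
    have : Unique (NonintersectingWalks b 0 s s) :=
      { default := ⟨fun _ => s, rfl, rfl, fun _ => hs, fun t => t.elim0⟩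
        uniq := fun w => by ext t j; rw [Fin.fin_one_eq_zero t, w.pos_zero] }
    exact Nat.card_unique
  · have : IsEmpty (NonintersectingWalks b 0 s e) :=
      ⟨fun w => hse (w.pos_zero.symm.trans w.pos_last)⟩
    exact Nat.card_of_isEmpty

lemma pos_one_mem (w : NonintersectingWalks b (n + 1) s e) : w.pos 1 ∈ nextPositions s := by
  simpa only [Fin.succ_zero_eq_one, Fin.castSucc_zero, w.pos_zero] using w.pos_succ_mem 0

def tailEquiv (hs : StrictAnti s) {y : Fin b → ℤ} (hy : y ∈ nextPositions s) :
    {w : NonintersectingWalks b (n + 1) s e // w.pos 1 = y} ≃ NonintersectingWalks b n y e where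
  toFun w :=
    { pos := Fin.tail w.1.pos
      pos_zero := w.2
      pos_last := by simp only [Fin.tail, Fin.succ_last, w.1.pos_last]
      strictAnti_pos := fun t => w.1.strictAnti_pos t.succ
      pos_succ_mem := fun t => w.1.pos_succ_mem t.succ }
  invFun w :=
    ⟨{ pos := Fin.cons s w.pos
       pos_zero := rfl
       pos_last := by rw [← Fin.succ_last, Fin.cons_succ, w.pos_last]
       strictAnti_pos := Fin.cases hs fun t => w.strictAnti_pos t
       pos_succ_mem := Fin.cases (by simpa [w.pos_zero] using hy) fun t => by
         simpa [← Fin.succ_castSucc] using w.pos_succ_mem t },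
     by simp only [Fin.cons_one, w.pos_zero]⟩
  left_inv w := by
    ext t : 3
    induction t using Fin.cases with
    | zero => simp [w.1.pos_zero]
    | succ t => rfl
  right_inv _ := rfl

lemma card_succ (hs : StrictAnti s) :
    Nat.card (NonintersectingWalks b (n + 1) s e) =
      ∑ y ∈ nextPositions s, Nat.card (NonintersectingWalks b n y e) := by
  classical
  have := Fintype.ofFinite (NonintersectingWalks b (n + 1) s e)
  have hmaps : Set.MapsTo (fun w : NonintersectingWalks b (n + 1) s e => w.pos 1)
      ((univ : Finset (NonintersectingWalks b (n + 1) s e)) : Set _) (nextPositions s) :=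
    fun w _ => w.pos_one_mem
  rw [Nat.card_eq_fintype_card, ← card_univ, card_eq_sum_card_fiberwise hmaps]
  refine sum_congr rfl fun y hy => ?_
  rw [← Nat.card_congr (tailEquiv hs hy), Nat.card_eq_fintype_card, Fintype.card_subtype]

theorem card_eq_det {s e : Fin b → ℤ} (hs : StrictAnti s) (he : StrictAnti e) (n : ℕ) :
    (Nat.card (NonintersectingWalks b n s e) : ℤ) =
      (of fun j k => (chooseZ n (s j - e k) : ℤ)).det := by
  induction n generalizing s with
  | zero =>
    rw [card_zero hs]
    simp [chooseZ_zero_left, sub_eq_zero, det_ite_eq_of_strictAnti hs he]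
  | succ n ih =>
    have hrows : (of fun j k => (chooseZ (n + 1) (s j - e k) : ℤ)) =
        fun j => ∑ y ∈ ({s j, s j - 1} : Finset ℤ), fun k => (chooseZ n (y - e k) : ℤ) := by
      ext j k
      rw [sum_pair (by omega)]
      simp [chooseZ_succ_left, sub_right_comm]
    have hexpand :=
      (detRowAlternating : (Fin b → ℤ) [⋀^Fin b]→ₗ[ℤ] ℤ).toMultilinearMap.map_sum_finset
        (fun _ y k => (chooseZ n (y - e k) : ℤ)) fun j => ({s j, s j - 1} : Finset ℤ)
    rw [card_succ hs, hrows, Nat.cast_sum]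
    refine Eq.trans ?_ hexpand.symm
    refine sum_congr rfl fun y hy => ?_
    by_cases hy' : StrictAnti y
    · exact ih hy'
    · -- two particles meet, so two rows coincide
      obtain ⟨j, j', hjj', hyy⟩ : ∃ j j', j ≠ j' ∧ y j = y j' := by
        by_contra! h
        exact hy' ((antitone_of_mem_nextPositions hs hy).strictAnti_of_injective
          fun j j' hyy => by_contra fun hne => h j j' hne hyy)
      rw [card_eq_zero_of_not_strictAnti hy', Nat.cast_zero, eq_comm]
      exact det_zero_of_row_eq hjj' (by ext k; simp [hyy])

end NonintersectingWalks

end Walks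


section Conjugate

variable {N : ℕ}

/-- For antitone `f` with values at most `M`, the conjugate partition. -/
def conjugate (M : ℕ) (f : Fin N → ℕ) : Fin M → ℕ := fun k => #{i | (k : ℕ) < f i}

lemma conjugate_antitone (M : ℕ) (f : Fin N → ℕ) : Antitone (conjugate M f) :=
  fun k k' hkk' => card_le_card fun i hi => by
    simp only [mem_filter, mem_univ, true_and] at hi ⊢
    exact lt_of_le_of_lt hkk' hi

lemma conjugate_mono (M : ℕ) {f g : Fin N → ℕ} (hfg : f ≤ g) : conjugate M f ≤ conjugate M g :=
  fun k => card_le_card fun i hi => by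
    simp only [mem_filter, mem_univ, true_and] at hi ⊢
    exact hi.trans_le (hfg i)

lemma lt_apply_iff_lt_conjugate {M : ℕ} {f : Fin N → ℕ} (hf : Antitone f) (i : Fin N)
    (k : Fin M) : (k : ℕ) < f i ↔ (i : ℕ) < conjugate M f k := by
  constructor
  · intro h
    calc (i : ℕ) < #(Iic i) := by simp
      _ ≤ _ := card_le_card fun i' hi' => by simpa using h.trans_le (hf (mem_Iic.1 hi'))
  · intro h
    by_contra! hle
    have : conjugate M f k ≤ #(Iio i) := card_le_card fun i' hi' => by
      simp only [mem_filter, mem_univ, true_and] at hi'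
      exact mem_Iio.2 (lt_of_not_ge fun hii' => (hi'.trans_le (hf hii')).not_ge hle)
    simp only [Fin.card_Iio] at this
    omega

lemma conjugate_conjugate {M : ℕ} {f : Fin N → ℕ} (hf : Antitone f) (hfM : ∀ i, f i ≤ M) :
    conjugate N (conjugate M f) = f := by
  funext i
  change #{k : Fin M | (i : ℕ) < conjugate M f k} = f i
  rw [filter_congr fun k _ => (lt_apply_iff_lt_conjugate hf i k).symm, Fin.card_filter_val_lt,
    min_eq_right (hfM i)]

lemma conjugate_zero {M : ℕ} {f : Fin N → ℕ} (hf : ∀ i, 0 < f i) :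
    conjugate (M + 1) f 0 = N := by
  simp [conjugate, hf]

lemma conjugate_last {M : ℕ} {f : Fin N → ℕ} (hf : ∀ i, f i ≤ M) :
    conjugate (M + 1) f (Fin.last M) = 0 := by
  simp [conjugate, hf]

lemma conjugate_castSucc {M : ℕ} (f : Fin N → ℕ) (t : Fin M) :
    conjugate (M + 1) f t.castSucc = conjugate (M + 1) f t.succ + #{i | f i = t + 1} := by
  simp only [conjugate, Fin.val_castSucc, Fin.val_succ]
  rw [← card_union_of_disjoint (disjoint_filter.2 fun i _ h h' => by omega), ← filter_or]
  congr 1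
  ext i
  simp only [mem_filter, mem_univ, true_and]
  omega

end Conjugate


section Bijection

variable {a b c : ℕ}

lemma antitone_add_val {n : ℕ} {f : Fin n → ℤ} (hf : StrictAnti f) :
    Antitone fun j => f j + (j : ℕ) := by
  cases n with
  | zero => exact fun j => j.elim0
  | succ n =>
    refine Fin.antitone_iff_succ_le.2 fun j => ?_
    have := hf j.castSucc_lt_succ
    simp only [Fin.val_succ, Fin.val_castSucc, Nat.cast_succ]
    omega

abbrev PlanePartition (a b c : ℕ) :=
  {π : Fin a → Fin b → Fin (c + 1) // ∀ i i' j j', i ≤ i' → j ≤ j' → π i' j' ≤ π i j}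

abbrev BoxWalks (a b c : ℕ) :=
  NonintersectingWalks b (a + c) (fun j => (a - j : ℤ)) (fun j => -(j : ℤ))

def jumpTimes (π : Fin a → Fin b → Fin (c + 1)) (j : Fin b) (i : Fin a) : ℕ := π i j + a - i

namespace PlanePartition

variable (π : PlanePartition a b c)

lemma strictAnti_jumpTimes (j : Fin b) : StrictAnti (jumpTimes π.1 j) := fun i i' hii' => by
  have := π.2 i i' j j hii'.le le_rfl
  simp only [jumpTimes, Fin.le_def, Fin.lt_def] at this hii' ⊢
  omega

lemma jumpTimes_pos (j : Fin b) (i : Fin a) : 0 < jumpTimes π.1 j i := by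
  simp only [jumpTimes]
  omega

lemma jumpTimes_le (j : Fin b) (i : Fin a) : jumpTimes π.1 j i ≤ a + c := by
  have := (π.1 i j).is_lt
  simp only [jumpTimes]
  omega

lemma jumpTimes_anti {j j' : Fin b} (hjj' : j ≤ j') : jumpTimes π.1 j' ≤ jumpTimes π.1 j :=
  fun i => by
    have := π.2 i i j j' le_rfl hjj'
    simp only [jumpTimes, Fin.le_def] at this ⊢
    omega

/-- Walker `j` moves down exactly at the steps ending at the times `jumpTimes π j`. -/
def toWalks : BoxWalks a b c where
  pos t j := conjugate (a + c + 1) (jumpTimes π.1 j) t - j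
  pos_zero := by
    funext j
    simp [conjugate_zero (π.jumpTimes_pos j)]
  pos_last := by
    funext j
    simp [conjugate_last (π.jumpTimes_le j)]
  strictAnti_pos t j j' hjj' := by
    have : conjugate (a + c + 1) (jumpTimes π.1 j') t ≤
        conjugate (a + c + 1) (jumpTimes π.1 j) t :=
      conjugate_mono (a + c + 1) (π.jumpTimes_anti hjj'.le) t
    simp only [Fin.lt_def] at hjj' ⊢
    omega
  pos_succ_mem t := mem_nextPositions.2 fun j => by
    have hstep := conjugate_castSucc (jumpTimes π.1 j) t
    have hjump : #{i | jumpTimes π.1 j i = t + 1} ≤ 1 := card_le_one.2 fun i hi i' hi' =>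
      (π.strictAnti_jumpTimes j).injective <| by
        simp only [mem_filter, mem_univ, true_and] at hi hi'
        rw [hi, hi']
    omega

end PlanePartition

namespace NonintersectingWalks

variable (w : BoxWalks a b c)

def height (j : Fin b) (t : Fin (a + c + 1)) : ℕ := (w.pos t j + (j : ℕ)).toNat

lemma height_cast (j : Fin b) (t : Fin (a + c + 1)) :
    (w.height j t : ℤ) = w.pos t j + (j : ℕ) :=
  Int.toNat_of_nonneg (by linarith [(w.pos_mem_Icc t j).1])

lemma antitone_height (j : Fin b) : Antitone (w.height j) := fun t t' htt' => by
  have : w.pos t' j ≤ w.pos t j := w.antitone_pos j htt'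
  have := w.height_cast j t
  have := w.height_cast j t'
  omega

lemma height_zero (j : Fin b) : w.height j 0 = a := by
  simp [height, w.pos_zero]

lemma height_last (j : Fin b) : w.height j (Fin.last _) = 0 := by
  simp [height, w.pos_last]

lemma height_le (j : Fin b) (t : Fin (a + c + 1)) : w.height j t ≤ a :=
  (w.antitone_height j (Fin.zero_le t)).trans_eq (w.height_zero j)

lemma height_anti {j j' : Fin b} (hjj' : j ≤ j') : w.height j' ≤ w.height j := fun t => by
  have : w.pos t j' + (j' : ℕ) ≤ w.pos t j + (j : ℕ) := antitone_add_val (w.strictAnti_pos t) hjj'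
  have := w.height_cast j t
  have := w.height_cast j' t
  zify
  linarith

lemma height_castSucc_le (j : Fin b) (t : Fin (a + c)) :
    w.height j t.castSucc ≤ w.height j t.succ + 1 := by
  have := w.height_cast j t.castSucc
  have := w.height_cast j t.succ
  rcases mem_nextPositions.1 (w.pos_succ_mem t) j with h | h <;> omega

def jumps (j : Fin b) : Fin a → ℕ := conjugate a (w.height j)

lemma conjugate_jumps (j : Fin b) : conjugate (a + c + 1) (w.jumps j) = w.height j :=
  conjugate_conjugate (w.antitone_height j) (w.height_le j)

lemma jumps_pos (j : Fin b) (i : Fin a) : 0 < w.jumps j i :=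
  (lt_apply_iff_lt_conjugate (w.antitone_height j) 0 i).1 (by simp [height_zero])

lemma jumps_le (j : Fin b) (i : Fin a) : w.jumps j i ≤ a + c := by
  by_contra! h
  have := (lt_apply_iff_lt_conjugate (w.antitone_height j) (Fin.last _) i).2 (by rwa [Fin.val_last])
  simp [height_last] at this

lemma strictAnti_jumps (j : Fin b) : StrictAnti (w.jumps j) :=
  (conjugate_antitone _ _).strictAnti_of_injective fun i i' hii' => by
    change w.jumps j i = w.jumps j i' at hii'
    -- at each step the walker moves down at most once
    have := w.jumps_pos j i
    let t : Fin (a + c) := ⟨w.jumps j i - 1, by have := w.jumps_le j i; omega⟩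
    have hstep := conjugate_castSucc (w.jumps j) t
    rw [conjugate_jumps] at hstep
    have := w.height_castSucc_le j t
    have hcard : #{k | w.jumps j k = t + 1} ≤ 1 := by omega
    refine card_le_one.1 hcard i ?_ i' ?_ <;>
      simp only [t, mem_filter, mem_univ, true_and] <;> omega

lemma jumps_add_val_le {j : Fin b} {i i' : Fin a} (hii' : i ≤ i') :
    w.jumps j i' + i' ≤ w.jumps j i + i := by
  have : (w.jumps j i' : ℤ) + i' ≤ w.jumps j i + i :=
    antitone_add_val (Nat.strictMono_cast.comp_strictAnti (w.strictAnti_jumps j)) hii'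
  omega

lemma jumps_add_le (j : Fin b) (i : Fin a) : w.jumps j i + i ≤ a + c := by
  have h := w.jumps_add_val_le (j := j) (i := ⟨0, i.pos⟩) (i' := i) (Fin.le_def.2 (Nat.zero_le _))
  have := w.jumps_le j ⟨0, i.pos⟩
  dsimp only at h
  omega

lemma le_jumps_add (j : Fin b) (i : Fin a) : a ≤ w.jumps j i + i := by
  have h := w.jumps_add_val_le (j := j) (i' := ⟨a - 1, Nat.sub_one_lt_of_lt i.is_lt⟩)
    (Fin.le_def.2 (Nat.le_sub_one_of_lt i.is_lt))
  have := w.jumps_pos j ⟨a - 1, Nat.sub_one_lt_of_lt i.is_lt⟩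
  dsimp only at h
  omega

def toPlanePartition : PlanePartition a b c :=
  ⟨fun i j => ⟨w.jumps j i + i - a, by have := w.jumps_add_le j i; omega⟩,
    fun i i' j j' hii' hjj' => by
      have := w.jumps_add_val_le (j := j) hii'
      have : w.jumps j' i' ≤ w.jumps j i' := conjugate_mono a (w.height_anti hjj') i'
      have := w.le_jumps_add j' i'
      rw [Fin.mk_le_mk]
      omega⟩

end NonintersectingWalks

def planePartitionEquivBoxWalks : PlanePartition a b c ≃ BoxWalks a b c where
  toFun := PlanePartition.toWalks
  invFun := NonintersectingWalks.toPlanePartition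
  left_inv π := by
    have hheight (j : Fin b) : π.toWalks.height j = conjugate (a + c + 1) (jumpTimes π.1 j) := by
      funext t
      simp [NonintersectingWalks.height, PlanePartition.toWalks]
    have hjumps (j : Fin b) : π.toWalks.jumps j = jumpTimes π.1 j := by
      rw [NonintersectingWalks.jumps, hheight, conjugate_conjugate
        (π.strictAnti_jumpTimes j).antitone fun i => by linarith [π.jumpTimes_le j i]]
    ext i j
    simp only [NonintersectingWalks.toPlanePartition, hjumps, jumpTimes]
    omega
  right_inv w := by
    have hjumps (j : Fin b) : jumpTimes w.toPlanePartition.1 j = w.jumps j := by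
      funext i
      have := w.le_jumps_add j i
      simp only [jumpTimes, NonintersectingWalks.toPlanePartition]
      omega
    ext t j
    simp only [PlanePartition.toWalks, hjumps, NonintersectingWalks.conjugate_jumps]
    linarith [w.height_cast j t]

end Bijection


section Determinant

variable {b : ℕ}

lemma pascal_mul_of_chooseZ (m : ℕ) (v : Fin b → ℤ) :
    (of fun j j' : Fin b => ((j : ℕ).choose j' : ℤ)) *
        (of fun j k : Fin b => (chooseZ m (v k - j) : ℤ)) =
      of fun j k : Fin b => (chooseZ (m + j) (v k) : ℤ) := by
  ext j k
  rw [mul_apply, of_apply, ← sum_choose_mul_chooseZ, Nat.cast_sum]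
  simp only [of_apply]
  rw [Fin.sum_univ_eq_sum_range (fun s => ((j : ℕ).choose s : ℤ) * chooseZ m (v k - s)) b]
  refine (sum_subset (range_subset_range.2 j.is_lt) fun s _ hs => ?_).symm
  rw [Nat.choose_eq_zero_of_lt (by simpa using hs)]
  simp

lemma det_pascal : (of fun j j' : Fin b => ((j : ℕ).choose j' : ℤ)).det = 1 := by
  rw [det_of_isLowerTriangular _ fun j j' (h : j < j') => by simp [Nat.choose_eq_zero_of_lt h]]
  simp

lemma choose_add_mul_factorial_mul_factorial (p q k : ℕ) :
    (p + q).choose (p + k) * (p + k)! * q ! = (p + q)! * q.descFactorial k := by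
  rcases le_or_gt k q with hk | hk
  · rw [← Nat.factorial_mul_descFactorial hk, ← Nat.choose_mul_factorial_mul_factorial
      (show p + k ≤ p + q by omega), show p + q - (p + k) = q - k by omega]
    ring
  · rw [Nat.choose_eq_zero_of_lt (by omega), Nat.descFactorial_eq_zero_iff_lt.2 hk]
    simp

lemma det_descFactorial (c : ℕ) :
    (of fun j k : Fin b => ((c + j).descFactorial k : ℤ)).det = ∏ j ∈ range b, (j ! : ℤ) := by
  have hentries : (of fun j k : Fin b => ((c + j).descFactorial k : ℤ)) =
      of fun j k : Fin b => (descPochhammer ℤ k).eval ((c + j : ℕ) : ℤ) := by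
    ext j k
    rw [of_apply, of_apply, descPochhammer_eval_eq_descFactorial]
  rw [hentries, ← det_eval_matrixOfPolynomials_eq_det_vandermonde _ _
    (fun k => descPochhammer_natDegree ℤ k) fun k => monic_descPochhammer ℤ k]
  cases b with
  | zero => simp
  | succ B =>
    simp only [Nat.cast_add, add_comm (c : ℤ)]
    rw [det_vandermonde_add, det_vandermonde_id_eq_superFactorial,
      ← Nat.prod_range_succ_factorial]
    push_cast
    rfl

lemma det_chooseZ_sub_val (m : ℕ) (v : Fin b → ℤ) :
    (of fun j k : Fin b => (chooseZ m (v k - j) : ℤ)).det =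
      (of fun j k : Fin b => (chooseZ (m + j) (v k) : ℤ)).det := by
  rw [← one_mul (det _), ← det_pascal, ← det_mul, pascal_mul_of_chooseZ]

theorem det_choose_mul_prod_factorial (p q : ℕ) :
    (of fun j k : Fin b => ((p + q + j).choose (p + k) : ℤ)).det *
        ∏ k ∈ range b, ((p + k)! * (q + k)! : ℤ) =
      ∏ j ∈ range b, (j ! * (p + q + j)! : ℤ) := by
  have hentries : (of fun j k : Fin b =>
        ((q + j)! : ℤ) * (((p + k)! : ℤ) * ((p + q + j).choose (p + k) : ℤ))) =
      of fun j k : Fin b => ((p + q + j)! : ℤ) * ((q + j).descFactorial k : ℤ) := by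
    ext j k
    have := choose_add_mul_factorial_mul_factorial p (q + j) k
    rw [← add_assoc] at this
    rw [of_apply, of_apply]
    exact_mod_cast (by rw [← this]; ring)
  have hdet := congr_arg det hentries
  have hcol := det_mul_column (fun j : Fin b => ((q + j)! : ℤ))
    (of fun j k : Fin b => ((p + k)! : ℤ) * ((p + q + j).choose (p + k) : ℤ))
  have hrow := det_mul_row (fun k : Fin b => ((p + k)! : ℤ))
    (of fun j k : Fin b => ((p + q + j).choose (p + k) : ℤ))
  have hfac := det_mul_column (fun j : Fin b => ((p + q + j)! : ℤ))
    (of fun j k : Fin b => ((q + j).descFactorial k : ℤ))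
  simp only [of_apply] at hcol hrow hfac
  rw [hcol, hrow, hfac, det_descFactorial] at hdet
  rw [Fin.prod_univ_eq_prod_range (fun i => ((q + i)! : ℤ)) b,
    Fin.prod_univ_eq_prod_range (fun i => ((p + i)! : ℤ)) b,
    Fin.prod_univ_eq_prod_range (fun i => ((p + q + i)! : ℤ)) b] at hdet
  rw [prod_mul_distrib, prod_mul_distrib]
  linear_combination hdet

end Determinant


theorem card_planePartition_mul_prod_factorial (a b c : ℕ) :
    Nat.card (PlanePartition a b c) * ∏ k ∈ range b, ((a + k)! * (c + k)!) =
      ∏ j ∈ range b, (j ! * (a + c + j)!) := by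
  have hs : StrictAnti fun j : Fin b => (a - j : ℤ) := fun j j' h => by
    simpa using Fin.lt_def.1 h
  have he : StrictAnti fun j : Fin b => -(j : ℤ) := fun j j' h => by
    simpa using Fin.lt_def.1 h
  have hdet := NonintersectingWalks.card_eq_det hs he (a + c)
  rw [← Nat.card_congr planePartitionEquivBoxWalks] at hdet
  simp only [sub_neg_eq_add, sub_add_eq_add_sub] at hdet
  rw [det_chooseZ_sub_val] at hdet
  simp only [← Nat.cast_add, chooseZ_natCast] at hdet
  exact_mod_cast hdet ▸ det_choose_mul_prod_factorial a c

end MacMahon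

/-- MacMahon's box formula: the number of plane partitions in an `a × b × c` box
(weakly decreasing functions `{1..a}×{1..b} → {0..c}`) satisfies
`card * H(a+b)H(a+c)H(b+c) = H(a)H(b)H(c)H(a+b+c)`. -/
theorem macmahon_box (a b c : ℕ) :
    Fintype.card {π : Fin a → Fin b → Fin (c + 1) //
        ∀ i i' j j', i ≤ i' → j ≤ j' → π i' j' ≤ π i j} *
      (hyperH (a + b) * hyperH (a + c) * hyperH (b + c)) =
    hyperH a * hyperH b * hyperH c * hyperH (a + b + c) := by
  have key := MacMahon.card_planePartition_mul_prod_factorial a b c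
  rw [Nat.card_eq_fintype_card, Finset.prod_mul_distrib, Finset.prod_mul_distrib] at key
  have hH (x : ℕ) : hyperH (x + b) = hyperH x * ∏ k ∈ Finset.range b, (x + k).factorial :=
    Finset.prod_range_add _ x b
  rw [hH a, add_comm b c, hH c, add_right_comm, hH (a + c)]
  calc _ = Fintype.card (MacMahon.PlanePartition a b c) *
        ((∏ k ∈ Finset.range b, (a + k).factorial) * ∏ k ∈ Finset.range b, (c + k).factorial) *
        (hyperH a * hyperH c * hyperH (a + c)) := by ring
    _ = _ := by rw [key]; unfold hyperH; ring
end

section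
/- For generic parameters a, b, q and nonnegative integers l_1 < ⋯ < l_m, the determinant det_{1≤j,k≤m}((aq^{j-1}; q)_{l_k} (bq^{m-j}; q)_{l_k}) equals q^{C(m,3)} b^{C(m,2)} ∏_{j=1}^m [(a;q)_{l_j}(b;q)_{l_j}(q^{j-m}a/b;q)_{j-1} / ((a;q)_{j-1}(b;q)_{j-1})] · ∏_{1≤i<j≤m}(q^{l_j}-q^{l_i}). -/
/-!
Multiplying row `j` by `(a;q)_j (b;q)_{m-1-j}` turns the `(j, k)` entry into
`(a;q)_{l_k} (b;q)_{l_k} P_j(q^{l_k})` with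
`P_j(x) = ∏_{t<j} (1 - a q^t x) · ∏_{t<m-1-j} (1 - b q^t x)`, a polynomial of degree `< m`.
So the determinant is the determinant of the coefficient matrix of the `P_j` times the
Vandermonde determinant of the `q^{l_k}`. Consecutive `P_j` differ by
`(b q^{m-2-j} - a q^j) x` times the polynomial of the same shape for `m - 1`, so row differences
reduce the coefficient determinant from size `m` to size `m - 1` and evaluate it as a product
of the factors `b q^{m-1-j} - a q^i`, `i < j < m`; collecting powers of `b q^{m-1-j}` in these
gives `q^{C(m,3)} b^{C(m,2)}` and the Pochhammer symbols `(q^{j+1-m} a/b; q)_j`.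
-/

open Finset

/-- q-Pochhammer symbol `(x;q)_n = ∏_{j=0}^{n-1} (1 - x q^j)`. -/
def qPoch {K : Type*} [Field K] (q x : K) (n : ℕ) : K :=
  ∏ j ∈ Finset.range n, (1 - x * q ^ j)

open Polynomial

theorem Matrix.det_of_eval_eq_det_coeff_mul_det_vandermonde {R : Type*} [CommRing R] {n : ℕ}
    (p : Fin n → R[X]) (hp : ∀ j, (p j).natDegree < n) (x : Fin n → R) :
    Matrix.det (Matrix.of fun j k => (p j).eval (x k)) =
      Matrix.det (Matrix.of fun j i : Fin n => (p j).coeff i) * (Matrix.vandermonde x).det := by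
  rw [← Matrix.det_transpose (Matrix.vandermonde x), ← Matrix.det_mul]
  congr 1
  ext j k
  simp [Matrix.mul_apply, eval_eq_sum_range' (hp j), Fin.sum_univ_eq_sum_range
    (fun i => (p j).coeff i * x k ^ i)]

section LinearFactors

variable {R : Type*} [CommRing R] (α β : ℕ → R)

noncomputable def linearFactorsProd (n j : ℕ) : R[X] :=
  (∏ t ∈ range j, (1 - C (α t) * X)) * ∏ t ∈ range (n - 1 - j), (1 - C (β t) * X)

lemma natDegree_prod_one_sub_C_mul_X_le (s : ℕ) :
    (∏ t ∈ range s, (1 - C (α t) * X)).natDegree ≤ s := by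
  have h : ∀ t, (1 - C (α t) * X).natDegree ≤ 1 := fun t => by compute_degree!
  refine (natDegree_prod_le _ _).trans ?_
  simpa using sum_le_sum (s := range s) fun t _ => h t

lemma natDegree_linearFactorsProd_lt {n j : ℕ} (hj : j < n) :
    (linearFactorsProd α β n j).natDegree < n := by
  have := natDegree_prod_one_sub_C_mul_X_le α j
  have := natDegree_prod_one_sub_C_mul_X_le β (n - 1 - j)
  exact natDegree_mul_le.trans_lt (by omega)

lemma coeff_linearFactorsProd_zero (n j : ℕ) : (linearFactorsProd α β n j).coeff 0 = 1 := by
  simp [linearFactorsProd, coeff_zero_eq_eval_zero, eval_prod]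

lemma linearFactorsProd_succ_sub {n j : ℕ} (hj : j < n) :
    linearFactorsProd α β (n + 1) (j + 1) - linearFactorsProd α β (n + 1) j =
      C (β (n - 1 - j) - α j) * X * linearFactorsProd α β n j := by
  have h₁ : n + 1 - 1 - (j + 1) = n - 1 - j := by omega
  have h₂ : n + 1 - 1 - j = n - 1 - j + 1 := by omega
  simp only [linearFactorsProd, h₁, h₂, prod_range_succ, map_sub]
  ring

noncomputable def linearFactorsCoeffMatrix (n : ℕ) : Matrix (Fin n) (Fin n) R :=
  Matrix.of fun j i => (linearFactorsProd α β n j).coeff i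

lemma det_linearFactorsCoeffMatrix_succ (n : ℕ) :
    (linearFactorsCoeffMatrix α β (n + 1)).det =
      (∏ i ∈ range n, (β (n - 1 - i) - α i)) * (linearFactorsCoeffMatrix α β n).det := by
  let c : Fin n → R := fun i => β (n - 1 - i) - α i
  -- Subtracting from each row its predecessor leaves `e₀` as the first column.
  let B : Matrix (Fin (n + 1)) (Fin (n + 1)) R := Matrix.of <| Fin.cases
    (fun i => (linearFactorsProd α β (n + 1) 0).coeff i)
    (fun j i => (C (c j) * X * linearFactorsProd α β n j).coeff i)
  have hB : (linearFactorsCoeffMatrix α β (n + 1)).det = B.det := by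
    refine Matrix.det_eq_of_forall_row_eq_smul_add_pred (fun _ => 1) (fun _ => rfl) fun j i => ?_
    simp only [B, linearFactorsCoeffMatrix, Matrix.of_apply, Fin.cases_succ, Fin.val_succ,
      Fin.val_castSucc, one_mul, c, ← coeff_add, ← linearFactorsProd_succ_sub α β j.isLt,
      sub_add_cancel]
  have hB₀ : ∀ j : Fin n, B j.succ 0 = 0 := fun j => by simp [B]
  rw [hB, Matrix.det_succ_column_zero, Fin.sum_univ_succ]
  simp only [hB₀, mul_zero, zero_mul, sum_const_zero, add_zero]
  have hB₀₀ : B 0 0 = 1 := coeff_linearFactorsProd_zero α β _ _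
  have hminor : B.submatrix (Fin.succAbove 0) Fin.succ =
      Matrix.of fun j i => c j * linearFactorsCoeffMatrix α β n j i := by
    ext j i
    simp [B, linearFactorsCoeffMatrix, mul_assoc, coeff_C_mul, coeff_X_mul]
  rw [hB₀₀, hminor, Matrix.det_mul_column,
    Fin.prod_univ_eq_prod_range (fun i => β (n - 1 - i) - α i)]
  simp

lemma det_linearFactorsCoeffMatrix (n : ℕ) :
    (linearFactorsCoeffMatrix α β n).det =
      ∏ j ∈ range n, ∏ i ∈ range j, (β (n - 1 - j) - α i) := by
  induction n with
  | zero => simp [linearFactorsCoeffMatrix]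
  | succ n ih =>
    have hsub : ∀ j, n + 1 - 1 - (j + 1) = n - 1 - j := fun j => by omega
    rw [det_linearFactorsCoeffMatrix_succ, ih, prod_range_succ']
    simp only [prod_range_succ, hsub, prod_mul_distrib, prod_range_zero, mul_one]
    ring

end LinearFactors

theorem Finset.prod_filter_fst_lt_snd {α M : Type*} [Fintype α] [LinearOrder α]
    [LocallyFiniteOrderTop α] [CommMonoid M] (f : α → α → M) :
    ∏ p ∈ univ.filter (fun p : α × α => p.1 < p.2), f p.1 p.2 =
      ∏ i, ∏ j ∈ Ioi i, f i j := by
  rw [prod_filter, Fintype.prod_prod_type]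
  refine prod_congr rfl fun i _ => ?_
  rw [← prod_filter]
  congr 1
  ext j
  simp

section QPochhammer

variable {K : Type*} [Field K]

lemma qPoch_add (q x : K) (s t : ℕ) :
    qPoch q x (s + t) = qPoch q x s * qPoch q (x * q ^ s) t := by
  simp only [qPoch, prod_range_add, pow_add, mul_assoc]

lemma qPoch_shift_mul_qPoch (q x : K) (s t : ℕ) :
    qPoch q (x * q ^ s) t * qPoch q x s =
      qPoch q x t * ∏ i ∈ range s, (1 - x * q ^ i * q ^ t) := by
  rw [mul_comm, ← qPoch_add, add_comm, qPoch_add]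
  simp only [qPoch, mul_right_comm x]

lemma prod_range_sub_eq_pow_mul_qPoch {q : K} (a : K) {b : K} (hq : q ≠ 0) (hb : b ≠ 0)
    {m j : ℕ} (hj : j < m) :
    ∏ i ∈ range j, (b * q ^ (m - 1 - j) - a * q ^ i) =
      (b * q ^ (m - 1 - j)) ^ j * qPoch q (q ^ ((j : ℤ) + 1 - m) * a / b) j := by
  have hexp : (j : ℤ) + 1 - m = -((m - 1 - j : ℕ) : ℤ) := by omega
  have hpow : (b * q ^ (m - 1 - j)) ^ j = ∏ _i ∈ range j, b * q ^ (m - 1 - j) := by simp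
  rw [qPoch, hpow, ← prod_mul_distrib, hexp, zpow_neg, zpow_natCast]
  refine prod_congr rfl fun i _ => ?_
  field_simp

lemma sum_range_mul_sub_eq_choose_three (m : ℕ) :
    ∑ j ∈ range m, j * (m - 1 - j) = m.choose 3 := by
  induction m with
  | zero => simp
  | succ m ih =>
    have hsplit : ∀ j ∈ range m, j * (m + 1 - 1 - j) = j * (m - 1 - j) + j := fun j hj => by
      have := mem_range.mp hj
      rw [show m + 1 - 1 - j = m - 1 - j + 1 by omega, mul_add_one]
    rw [sum_range_succ, sum_congr rfl hsplit, sum_add_distrib, ih, sum_range_id,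
      ← Nat.choose_two_right, Nat.choose_succ_succ' m 2]
    simp [add_comm]

lemma prod_prod_range_sub_eq_pow_mul_prod_qPoch {q : K} (a : K) {b : K} (hq : q ≠ 0)
    (hb : b ≠ 0) (m : ℕ) :
    ∏ j ∈ range m, ∏ i ∈ range j, (b * q ^ (m - 1 - j) - a * q ^ i) =
      q ^ m.choose 3 * b ^ m.choose 2 *
        ∏ j ∈ range m, qPoch q (q ^ ((j : ℤ) + 1 - m) * a / b) j := by
  rw [prod_congr rfl fun j hj => prod_range_sub_eq_pow_mul_qPoch a hq hb (mem_range.mp hj),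
    prod_mul_distrib]
  congr 1
  simp only [mul_pow, ← pow_mul, prod_mul_distrib, prod_pow_eq_pow_sum,
    prod_pow_eq_pow_sum (range m) (fun j => j) b, sum_range_id, ← Nat.choose_two_right,
    mul_comm (m - 1 - _), sum_range_mul_sub_eq_choose_three]
  ring

lemma eval_linearFactorsProd_geometric (a b q y : K) (m j : ℕ) :
    (linearFactorsProd (fun t => a * q ^ t) (fun t => b * q ^ t) m j).eval y =
      (∏ t ∈ range j, (1 - a * q ^ t * y)) *
        ∏ t ∈ range (m - 1 - j), (1 - b * q ^ t * y) := by
  simp [linearFactorsProd, eval_prod]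

lemma det_qPoch_matrix (m : ℕ) (a b q : K) (l : Fin m → ℕ) :
    (∏ j : Fin m, qPoch q a j * qPoch q b (m - 1 - j)) *
        Matrix.det (Matrix.of fun j k : Fin m =>
          qPoch q (a * q ^ (j : ℕ)) (l k) * qPoch q (b * q ^ (m - 1 - (j : ℕ))) (l k)) =
      (∏ k, qPoch q a (l k) * qPoch q b (l k)) *
        (∏ j ∈ range m, ∏ i ∈ range j, (b * q ^ (m - 1 - j) - a * q ^ i)) *
        (Matrix.vandermonde fun k => q ^ l k).det := by
  set M := Matrix.of fun j k : Fin m =>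
    qPoch q (a * q ^ (j : ℕ)) (l k) * qPoch q (b * q ^ (m - 1 - (j : ℕ))) (l k)
  let P := linearFactorsProd (fun t => a * q ^ t) (fun t => b * q ^ t) m
  calc (∏ j : Fin m, qPoch q a j * qPoch q b (m - 1 - j)) * M.det
      = (Matrix.of fun j k : Fin m => qPoch q a j * qPoch q b (m - 1 - j) * M j k).det :=
        (Matrix.det_mul_column _ _).symm
    _ = (Matrix.of fun j k : Fin m =>
          qPoch q a (l k) * qPoch q b (l k) * (P j).eval (q ^ l k)).det := by
        congr 1
        ext j k
        have ha := qPoch_shift_mul_qPoch q a j (l k)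
        have hb := qPoch_shift_mul_qPoch q b (m - 1 - j) (l k)
        simp only [M, Matrix.of_apply, P, eval_linearFactorsProd_geometric]
        linear_combination
          (qPoch q (b * q ^ (m - 1 - (j : ℕ))) (l k) * qPoch q b (m - 1 - j)) * ha +
            (qPoch q a (l k) * ∏ i ∈ range j, (1 - a * q ^ i * q ^ l k)) * hb
    _ = (∏ k, qPoch q a (l k) * qPoch q b (l k)) *
          (Matrix.of fun j k : Fin m => (P j).eval (q ^ l k)).det :=
        Matrix.det_mul_row _ _
    _ = _ := by
        rw [Matrix.det_of_eval_eq_det_coeff_mul_det_vandermonde _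
            (fun j => natDegree_linearFactorsProd_lt _ _ j.isLt),
          ← linearFactorsCoeffMatrix.eq_1, det_linearFactorsCoeffMatrix, mul_assoc]

end QPochhammer

theorem det_qpoch_eval_general {K : Type*} [Field K] (m : ℕ) (a b q : K)
    (l : Fin m → ℕ)
    (hq : q ≠ 0) (hb : b ≠ 0)
    (ha' : ∀ j < m, qPoch q a j ≠ 0) (hb' : ∀ j < m, qPoch q b j ≠ 0) :
    Matrix.det (Matrix.of fun j k : Fin m =>
        qPoch q (a * q ^ (j : ℕ)) (l k) * qPoch q (b * q ^ (m - 1 - (j : ℕ))) (l k)) =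
      q ^ Nat.choose m 3 * b ^ Nat.choose m 2 *
        (∏ j : Fin m,
          qPoch q a (l j) * qPoch q b (l j) *
            qPoch q (q ^ (((j : ℕ) : ℤ) + 1 - (m : ℤ)) * a / b) (j : ℕ) /
            (qPoch q a (j : ℕ) * qPoch q b (j : ℕ))) *
        ∏ p ∈ Finset.univ.filter (fun p : Fin m × Fin m => p.1 < p.2),
          (q ^ l p.2 - q ^ l p.1) := by
  have hreflect : ∏ j : Fin m, qPoch q a j * qPoch q b (m - 1 - j) =
      ∏ j : Fin m, qPoch q a j * qPoch q b j := by
    simp only [prod_mul_distrib, Fin.prod_univ_eq_prod_range (fun j => qPoch q b (m - 1 - j)),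
      Fin.prod_univ_eq_prod_range (fun j => qPoch q b j), prod_range_reflect]
  have hne : ∏ j : Fin m, qPoch q a j * qPoch q b j ≠ 0 :=
    prod_ne_zero_iff.mpr fun j _ => mul_ne_zero (ha' j j.isLt) (hb' j j.isLt)
  have key := det_qPoch_matrix m a b q l
  rw [hreflect, mul_comm, prod_prod_range_sub_eq_pow_mul_prod_qPoch a hq hb, Matrix.det_vandermonde,
    ← prod_filter_fst_lt_snd fun i j : Fin m => q ^ l j - q ^ l i,
    ← Fin.prod_univ_eq_prod_range fun j => qPoch q (q ^ ((j : ℤ) + 1 - m) * a / b) j] at key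
  rw [eq_div_of_mul_eq hne key]
  simp only [prod_div_distrib, prod_mul_distrib]
  ring

/-- Determinant evaluation:
`det_{1≤j,k≤m}((aq^{j-1};q)_{l_k} (bq^{m-j};q)_{l_k})
 = q^(C(m,3)) b^(C(m,2)) ∏_j [(a;q)_{l_j}(b;q)_{l_j}(q^{j-m}a/b;q)_{j-1}/((a;q)_{j-1}(b;q)_{j-1})]
   · ∏_{i<j}(q^{l_j}-q^{l_i})`. -/
theorem det_qpoch_eval {K : Type*} [Field K] (m : ℕ) (a b q : K)
    (l : Fin m → ℕ) (hl : StrictMono l)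
    (hq : q ≠ 0) (hb : b ≠ 0)
    (ha' : ∀ j < m, qPoch q a j ≠ 0) (hb' : ∀ j < m, qPoch q b j ≠ 0) :
    Matrix.det (Matrix.of fun j k : Fin m =>
        qPoch q (a * q ^ (j : ℕ)) (l k) * qPoch q (b * q ^ (m - 1 - (j : ℕ))) (l k)) =
      q ^ Nat.choose m 3 * b ^ Nat.choose m 2 *
        (∏ j : Fin m,
          qPoch q a (l j) * qPoch q b (l j) *
            qPoch q (q ^ (((j : ℕ) : ℤ) + 1 - (m : ℤ)) * a / b) (j : ℕ) /
            (qPoch q a (j : ℕ) * qPoch q b (j : ℕ))) *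
        ∏ p ∈ Finset.univ.filter (fun p : Fin m × Fin m => p.1 < p.2),
          (q ^ l p.2 - q ^ l p.1) :=
  det_qpoch_eval_general m a b q l hq hb ha' hb'
end

section
/- Let μ be a linear functional on ℂ[x] and suppose (p_n) are monic polynomials with deg p_n = n satisfying μ(p_m p_n) = C_n δ_{mn}. Then for distinct y_1,…,y_m: ∫ Δ(x)² ∏_{j=1}^n ∏_{k=1}^m (y_k - x_j) dμ(x_1)⋯dμ(x_n) = n! C_0 C_1 ⋯ C_{n-1} · det_{1≤j,k≤m}(p_{n+j-1}(y_k)) / Δ(y), where the left side denotes μ applied in each variable x_1,…,x_n. -/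
/-!
Since the `p_i` are monic with `deg p_i = i`, row operations turn `(p_i(v_j))` into the
Vandermonde matrix of `v`. Applied to `x` and to `(x₁, …, xₙ, y₁, …, y_m)` this gives
`Δ(x) · Δ(x, y) = Δ(y) · Δ(x)² · ∏ (y_k - x_j)`, so it suffices to integrate
`Δ(x) · Δ(x, y)`.
Expanding `Δ(x) = det (p_i(x_j))` by Leibniz, the integral of `∏ⱼ p_{σ j}(x_j) · Δ(x, y)` is
computed column by column: the column of `x_j` becomes `(μ(p_{σ j} p_a))_a = C_{σ j} e_{σ j}`.
The resulting matrix is block triangular with determinant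
`sgn σ · C_0 ⋯ C_{n-1} · det (p_{n+l}(y_k))`, and the `n!` terms of the expansion all agree.
-/

open Finset

/-- Apply the linear functional `μ` on `ℂ[x]` in each of the `n` variables of a
multivariate polynomial ("n-fold formal integral against `dμ`"). -/
noncomputable def muIter (μ : Polynomial ℂ →ₗ[ℂ] ℂ) :
    (n : ℕ) → MvPolynomial (Fin n) ℂ → ℂ
  | 0, P => MvPolynomial.constantCoeff P
  | n + 1, P =>
      muIter μ n
        (((MvPolynomial.finSuccEquiv ℂ n) P).sum fun i c => μ (Polynomial.X ^ i) • c)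

open Equiv Matrix

section Vandermonde

theorem Fin.prod_Ioi_append {α M : Type*} [CommMonoid M] {n m : ℕ} (a : Fin n → α)
    (b : Fin m → α) (g : α → α → M) :
    ∏ i, ∏ j ∈ Ioi i, g (append a b i) (append a b j) =
      (∏ i, ∏ j ∈ Ioi i, g (a i) (a j)) * (∏ k, ∏ l ∈ Ioi k, g (b k) (b l)) *
        ∏ i, ∏ k, g (a i) (b k) := by
  have h_lt (i : Fin n) (k : Fin m) : (i : ℕ) < n + k := by omega
  have h_not_lt (k : Fin m) (i : Fin n) : ¬ n + (k : ℕ) < i := by omega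
  simp only [← filter_lt_eq_Ioi, prod_filter, Fin.prod_univ_add, append_left, append_right,
    Fin.lt_def, Fin.val_castAdd, Fin.val_natAdd, add_lt_add_iff_left, h_lt, h_not_lt, if_true,
    if_false, prod_const_one, prod_mul_distrib]
  ac_rfl

variable {R : Type*} [CommRing R]

theorem Matrix.det_vandermonde_append {n m : ℕ} (a : Fin n → R) (b : Fin m → R) :
    (vandermonde (Fin.append a b)).det =
      (vandermonde a).det * (vandermonde b).det * ∏ i, ∏ k, (b k - a i) := by
  simp only [det_vandermonde]
  exact Fin.prod_Ioi_append a b fun u v => v - u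

theorem Matrix.det_vandermonde_eq_prod_filter_lt {n : ℕ} (v : Fin n → R) :
    (vandermonde v).det =
      ∏ pr ∈ univ.filter (fun pr : Fin n × Fin n => pr.1 < pr.2), (v pr.2 - v pr.1) := by
  rw [det_vandermonde, prod_filter, Fintype.prod_prod_type]
  simp only [← prod_filter, filter_lt_eq_Ioi]

variable {S : Type*} [CommRing S] [Nontrivial S] [Algebra R S]

theorem Matrix.det_aeval_eq_det_vandermonde {N : ℕ} (p : Fin N → Polynomial R)
    (hmonic : ∀ i, (p i).Monic) (hdeg : ∀ i, (p i).natDegree = i) (v : Fin N → S) :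
    (of fun i j => Polynomial.aeval (v j) (p i)).det = (vandermonde v).det := by
  rw [det_eval_matrixOfPolynomials_eq_det_vandermonde v
    (fun i => (p i).map (algebraMap R S)) (fun i => by rw [(hmonic i).natDegree_map, hdeg])
    (fun i => (hmonic i).map _), ← det_transpose]
  congr 1
  ext i j
  simp [Polynomial.aeval_def, Polynomial.eval_map]

/-- `Δ(x) · Δ(x, y)`, with `Δ(x, y) = det (p_a(v_b))` indexed by `Fin n ⊕ Fin m` so that the
columns of the `x_j` and of the `y_k` can be treated separately. -/
theorem det_aeval_mul_det_aeval_append {n m : ℕ} {p : ℕ → Polynomial R}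
    (hmonic : ∀ k, (p k).Monic) (hdeg : ∀ k, (p k).natDegree = k) (x : Fin n → S)
    (y : Fin m → R) :
    (of fun i j : Fin n => Polynomial.aeval (x j) (p i)).det *
        (of fun a b => Polynomial.aeval (Sum.elim x (algebraMap R S ∘ y) b)
          (p (finSumFinEquiv a))).det =
      algebraMap R S (vandermonde y).det *
        ((vandermonde x).det ^ 2 * ∏ j, ∏ k, (algebraMap R S (y k) - x j)) := by
  have h_reindex : (of fun a b => Polynomial.aeval (Sum.elim x (algebraMap R S ∘ y) b)
      (p (finSumFinEquiv a))) = (of fun a b : Fin (n + m) =>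
        Polynomial.aeval (Fin.append x (algebraMap R S ∘ y) b) (p a)).submatrix
          finSumFinEquiv finSumFinEquiv := by
    ext (i | l) (j | k) <;> simp
  have h_map : (vandermonde (algebraMap R S ∘ y)).det = algebraMap R S (vandermonde y).det := by
    simp [det_vandermonde]
  rw [h_reindex, det_submatrix_equiv_self, det_aeval_eq_det_vandermonde (fun i => p i)
    (fun i => hmonic i) (fun i => hdeg i), det_aeval_eq_det_vandermonde (fun a => p a)
    (fun a => hmonic a) (fun a => hdeg a), det_vandermonde_append, h_map]
  simp only [Function.comp_apply]
  ring

end Vandermonde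

section BaseChange

variable {R A : Type*} [CommSemiring R] [CommSemiring A] [Algebra R A]

/-- `μ ⊗ id_A`, i.e. `∑ aᵢ Xⁱ ↦ ∑ μ(Xⁱ) aᵢ`: one step of `muIter`. -/
noncomputable def Polynomial.functionalBaseChange (μ : Polynomial R →ₗ[R] R) :
    Polynomial A →ₗ[R] A :=
  Polynomial.lsum fun i => μ (Polynomial.X ^ i) • LinearMap.id

theorem Polynomial.functionalBaseChange_map_mul_C (μ : Polynomial R →ₗ[R] R) (q : Polynomial R)
    (a : A) : functionalBaseChange μ (q.map (algebraMap R A) * C a) = μ q • a := by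
  induction q using Polynomial.induction_on' with
  | add q r hq hr => simp only [Polynomial.map_add, add_mul, map_add, hq, hr, add_smul]
  | monomial i c =>
    have hμ : μ (monomial i c) = c * μ (X ^ i) := by
      rw [← smul_X_eq_monomial, map_smul, smul_eq_mul]
    simp only [functionalBaseChange, Algebra.smul_def, map_monomial, monomial_mul_C, lsum_apply,
      Module.End.mul_apply, LinearMap.id_coe, id_eq, Module.algebraMap_end_apply, mul_zero,
      sum_monomial_index, hμ, map_mul]
    ring

variable {n : ℕ}

theorem MvPolynomial.finSuccEquiv_aeval_X_zero (q : Polynomial R) :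
    finSuccEquiv R n (Polynomial.aeval (X 0) q) =
      q.map (algebraMap R (MvPolynomial (Fin n) R)) := by
  rw [← Polynomial.aeval_algHom_apply, finSuccEquiv_X_zero, Polynomial.aeval_X_left_eq_map]

theorem MvPolynomial.finSuccEquiv_aeval_X_succ (q : Polynomial R) (j : Fin n) :
    finSuccEquiv R n (Polynomial.aeval (X j.succ) q) =
      Polynomial.C (Polynomial.aeval (X j) q) := by
  rw [← Polynomial.aeval_algHom_apply, finSuccEquiv_X_succ]
  simpa using Polynomial.aeval_algHom_apply
    (Polynomial.CAlgHom : MvPolynomial (Fin n) R →ₐ[R] _) (X j) q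

end BaseChange

section MuIter

variable (μ : Polynomial ℂ →ₗ[ℂ] ℂ) {n m : ℕ}

noncomputable def muIterLinear : (n : ℕ) → MvPolynomial (Fin n) ℂ →ₗ[ℂ] ℂ
  | 0 => MvPolynomial.lcoeff ℂ 0
  | n + 1 => muIterLinear n ∘ₗ Polynomial.functionalBaseChange μ ∘ₗ
      (MvPolynomial.finSuccEquiv ℂ n).toLinearMap

theorem coe_muIterLinear : ⇑(muIterLinear μ n) = muIter μ n := by
  induction n with
  | zero => rfl
  | succ n ih => funext P; simp only [muIterLinear, muIter, ← ih]; rfl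

theorem muIter_C_mul (a : ℂ) (P : MvPolynomial (Fin n) ℂ) :
    muIter μ n (MvPolynomial.C a * P) = a * muIter μ n P := by
  rw [← MvPolynomial.smul_eq_C_mul, ← coe_muIterLinear, map_smul, smul_eq_mul]

theorem muIter_prod_aeval_X (q : Fin n → Polynomial ℂ) :
    muIter μ n (∏ j, Polynomial.aeval (MvPolynomial.X j) (q j)) = ∏ j, μ (q j) := by
  induction n with
  | zero => simp [muIter]
  | succ n ih =>
    rw [← coe_muIterLinear] at ih ⊢
    rw [Fin.prod_univ_succ, Fin.prod_univ_succ, ← ih, ← smul_eq_mul (μ (q 0)), ← map_smul]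
    simp only [muIterLinear, LinearMap.comp_apply, AlgEquiv.toLinearMap_apply, map_mul, map_prod,
      MvPolynomial.finSuccEquiv_aeval_X_zero, MvPolynomial.finSuccEquiv_aeval_X_succ]
    rw [← map_prod, Polynomial.functionalBaseChange_map_mul_C]

theorem muIter_prod_aeval_mul_det (q : Fin n → Polynomial ℂ)
    (r : Fin n ⊕ Fin m → Polynomial ℂ) (y : Fin m → ℂ) :
    muIter μ n ((∏ j, Polynomial.aeval (MvPolynomial.X j) (q j)) *
        (of fun a b => Polynomial.aeval (Sum.elim MvPolynomial.X (MvPolynomial.C ∘ y) b)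
          (r a)).det) =
      (of fun a b => Sum.elim (fun j => μ (q j * r a)) (fun k => (r a).eval (y k)) b).det := by
  have h_term (τ : Perm (Fin n ⊕ Fin m)) :
      (∏ j, Polynomial.aeval (MvPolynomial.X j) (q j)) *
          ∏ b, Polynomial.aeval (Sum.elim MvPolynomial.X (MvPolynomial.C ∘ y) b) (r (τ b)) =
        MvPolynomial.C (∏ k, (r (τ (.inr k))).eval (y k)) *
          ∏ j, Polynomial.aeval (MvPolynomial.X j) (q j * r (τ (.inl j))) := by
    simp only [Fintype.prod_sum_type, Sum.elim_inl, Sum.elim_inr, Function.comp_apply, map_mul,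
      prod_mul_distrib, map_prod, ← MvPolynomial.algebraMap_eq,
      Polynomial.aeval_algebraMap_apply_eq_algebraMap_eval]
    ring
  rw [det_apply, det_apply, mul_sum, ← coe_muIterLinear, map_sum]
  refine sum_congr rfl fun τ _ => ?_
  rw [mul_smul_comm, Units.smul_def, Units.smul_def, map_zsmul]
  simp only [of_apply]
  rw [h_term, coe_muIterLinear, muIter_C_mul, muIter_prod_aeval_X, Fintype.prod_sum_type,
    mul_comm]
  simp only [Sum.elim_inl, Sum.elim_inr]

end MuIter

section OrthogonalPolynomials

variable {μ : Polynomial ℂ →ₗ[ℂ] ℂ} {p : ℕ → Polynomial ℂ} {C : ℕ → ℂ} {n m : ℕ}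

theorem det_orthogonal_block_triangular
    (horth : ∀ i j, μ (p i * p j) = if i = j then C i else 0) (c : Fin n ⊕ Fin m → Fin m → ℂ) :
    (of fun a b => Sum.elim (fun j : Fin n => μ (p j * p (finSumFinEquiv a))) (c a) b).det =
      (∏ k ∈ range n, C k) * (of fun l k => c (.inr l) k).det := by
  have h_blocks :
      (of fun a b => Sum.elim (fun j : Fin n => μ (p j * p (finSumFinEquiv a))) (c a) b) =
        fromBlocks (diagonal fun i : Fin n => C i) (of fun i k => c (.inl i) k) 0
          (of fun l k => c (.inr l) k) := by
    ext (i | l) (j | k)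
    · obtain rfl | hij := eq_or_ne i j
      · simp [horth]
      · simp [horth, hij, hij.symm, Fin.val_eq_val]
    · rfl
    · have : (j : ℕ) ≠ n + l := by omega
      simp [horth, this]
    · rfl
  rw [h_blocks, det_fromBlocks_zero₂₁, det_diagonal,
    Fin.prod_univ_eq_prod_range (fun i => C i)]

theorem muIter_det_mul_det (horth : ∀ i j, μ (p i * p j) = if i = j then C i else 0)
    (y : Fin m → ℂ) :
    muIter μ n ((of fun i j : Fin n => Polynomial.aeval (MvPolynomial.X j) (p i)).det *
        (of fun a b => Polynomial.aeval (Sum.elim MvPolynomial.X (MvPolynomial.C ∘ y) b)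
          (p (finSumFinEquiv a))).det) =
      n.factorial * (∏ k ∈ range n, C k) *
        (of fun l k : Fin m => (p (n + l)).eval (y k)).det := by
  set N := of fun a b => Sum.elim (fun j : Fin n => μ (p j * p (finSumFinEquiv a)))
    (fun k => (p (finSumFinEquiv a)).eval (y k)) b
  have h_term (σ : Perm (Fin n)) :
      muIter μ n ((Perm.sign σ • ∏ j, Polynomial.aeval (MvPolynomial.X j) (p (σ j))) *
        (of fun a b => Polynomial.aeval (Sum.elim MvPolynomial.X (MvPolynomial.C ∘ y) b)
          (p (finSumFinEquiv a))).det) = N.det := by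
    have h_perm : (of fun a b => Sum.elim (fun j => μ (p (σ j) * p (finSumFinEquiv a)))
        (fun k => (p (finSumFinEquiv a)).eval (y k)) b) =
          N.submatrix id (sumCongr σ (Equiv.refl _)) := by
      ext a (j | k) <;> rfl
    rw [smul_mul_assoc, Units.smul_def, ← coe_muIterLinear, map_zsmul, coe_muIterLinear,
      muIter_prod_aeval_mul_det, h_perm, det_permute', Perm.sign_sumCongr, Perm.sign_refl,
      mul_one, zsmul_eq_mul, ← mul_assoc, ← Int.cast_mul, ← Units.val_mul, Int.units_mul_self,
      Units.val_one, Int.cast_one, one_mul]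
  rw [det_apply, sum_mul, ← coe_muIterLinear, map_sum]
  simp only [of_apply, coe_muIterLinear, h_term, sum_const, card_univ, Fintype.card_perm,
    Fintype.card_fin, nsmul_eq_mul, N, det_orthogonal_block_triangular horth, mul_assoc,
    finSumFinEquiv_apply_right, Fin.val_natAdd]

end OrthogonalPolynomials

/-- Heine–Christoffel: if `(p_n)` are monic, `deg p_n = n`, orthogonal for `μ`
with `μ(p_i p_j) = C_i δ_{ij}`, then for distinct `y_1,…,y_m`,
`∫ Δ(x)² ∏_{j,k}(y_k - x_j) dμ^{⊗n} = n! C_0⋯C_{n-1} det(p_{n+j-1}(y_k)) / Δ(y)`. -/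
theorem selberg_det_orthopoly (μ : Polynomial ℂ →ₗ[ℂ] ℂ)
    (p : ℕ → Polynomial ℂ) (C : ℕ → ℂ)
    (hmonic : ∀ k, (p k).Monic) (hdeg : ∀ k, (p k).natDegree = k)
    (horth : ∀ i j, μ (p i * p j) = if i = j then C i else 0)
    (n m : ℕ) (y : Fin m → ℂ) (hy : Function.Injective y) :
    muIter μ n
        ((∏ pr ∈ Finset.univ.filter (fun pr : Fin n × Fin n => pr.1 < pr.2),
            (MvPolynomial.X pr.2 - MvPolynomial.X pr.1)) ^ 2 *
          ∏ j : Fin n, ∏ k : Fin m, (MvPolynomial.C (y k) - MvPolynomial.X j)) =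
      (n.factorial : ℂ) * (∏ k ∈ Finset.range n, C k) *
        Matrix.det (Matrix.of fun j k : Fin m => (p (n + (j : ℕ))).eval (y k)) /
        ∏ pr ∈ Finset.univ.filter (fun pr : Fin m × Fin m => pr.1 < pr.2),
          (y pr.2 - y pr.1) := by
  have h_identity := det_aeval_mul_det_aeval_append (S := MvPolynomial (Fin n) ℂ) hmonic hdeg
    MvPolynomial.X y
  rw [MvPolynomial.algebraMap_eq] at h_identity
  rw [← det_vandermonde_eq_prod_filter_lt, ← det_vandermonde_eq_prod_filter_lt,
    eq_div_iff (det_vandermonde_ne_zero_iff.mpr hy), mul_comm, ← muIter_C_mul, ← h_identity,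
    muIter_det_mul_det horth]
end

section
/- For nonnegative integer l and indices 0 ≤ l_1 < ⋯ < l_m ≤ b+m−1 with ordered complement ĥ_1 < ⋯ < ĥ_b in {0,…,b+m−1}: ∏_{1≤i<j≤b}(q^{ĥ_j} − q^{ĥ_i}) = (−1)^{C(b,2)+C(m,2)} q^{C(b+m,3)+(2−b−m)|l|+∑_j C(l_j,2)} · [∏_{j=1}^{b+m}(q;q)_{j-1} / ∏_{j=1}^m (q;q)_{l_j}(q;q)_{b+m-1-l_j}] · ∏_{1≤i<j≤m}(q^{l_j}−q^{l_i}). -/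
/-!
Write `V(s) = ∏_{c < a in s} (q^a - q^c)` for a finite set `s ⊆ ℕ`. For disjoint `s`, `t`,
`V(s ∪ t) = V(s) V(t) X(s, t)` with `X` the product of the cross differences, while the product
over `a ∈ s` of all differences `q^a - q^c`, `c ∈ s ∪ t`, `c ≠ a` (each oriented as `q^max - q^min`) is
`V(s)² X(s, t)`. Eliminating `X` gives `V(t) · ∏_{a ∈ s} ∏_{c ≠ a} = V(s ∪ t) V(s)`. For
`s ∪ t = {0, …, n-1}` both `V(s ∪ t)` and each row `∏_{c ≠ a}` are explicit products of
q-Pochhammer symbols, which yields the formula for `V(t)` in terms of `V(s)`.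
-/

open Finset

section CommRing

variable {R : Type*} [CommRing R] (q : R)

def qDiff (a c : ℕ) : R := q ^ max a c - q ^ min a c

def qVandermonde (s : Finset ℕ) : R := ∏ a ∈ s, ∏ c ∈ s with c < a, (q ^ a - q ^ c)

lemma qDiff_comm (a c : ℕ) : qDiff q a c = qDiff q c a := by
  simp only [qDiff, max_comm, min_comm]

lemma qDiff_of_lt {a c : ℕ} (h : c < a) : qDiff q a c = q ^ a - q ^ c := by
  rw [qDiff, max_eq_left h.le, min_eq_right h.le]

lemma qDiff_of_gt {a c : ℕ} (h : a < c) : qDiff q a c = q ^ c - q ^ a := by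
  rw [qDiff, max_eq_right h.le, min_eq_left h.le]

lemma prod_qDiff_of_notMem {x : ℕ} {s : Finset ℕ} (hx : x ∉ s) :
    ∏ c ∈ s, qDiff q x c =
      (∏ c ∈ s with c < x, (q ^ x - q ^ c)) * ∏ c ∈ s with x < c, (q ^ c - q ^ x) := by
  rw [← prod_filter_mul_prod_filter_not s (· < x)]
  congr 1
  · exact prod_congr rfl fun c hc => qDiff_of_lt q (mem_filter.1 hc).2
  · refine prod_congr (filter_congr fun c hc => ?_) fun c hc => qDiff_of_gt q (mem_filter.1 hc).2
    have : c ≠ x := ne_of_mem_of_not_mem hc hx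
    omega

lemma qVandermonde_insert {x : ℕ} {s : Finset ℕ} (hx : x ∉ s) :
    qVandermonde q (insert x s) = (∏ c ∈ s, qDiff q x c) * qVandermonde q s := by
  have hrow : ∀ a ∈ s, ∏ c ∈ insert x s with c < a, (q ^ a - q ^ c) =
      (if x < a then q ^ a - q ^ x else 1) * ∏ c ∈ s with c < a, (q ^ a - q ^ c) := by
    intro a _
    rw [filter_insert]
    split_ifs
    · rw [prod_insert (by simp [hx])]
    · rw [one_mul]
  rw [qVandermonde, prod_insert hx, filter_insert, if_neg (lt_irrefl x), prod_congr rfl hrow,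
    prod_mul_distrib, ← prod_filter, prod_qDiff_of_notMem q hx, qVandermonde]
  ring

lemma qVandermonde_union {s t : Finset ℕ} (h : Disjoint s t) :
    qVandermonde q (s ∪ t) =
      qVandermonde q s * qVandermonde q t * ∏ a ∈ s, ∏ c ∈ t, qDiff q a c := by
  induction t using Finset.induction_on with
  | empty => simp [qVandermonde]
  | @insert x t hxt ih =>
    have hxs : x ∉ s := disjoint_right.1 h (mem_insert_self x t)
    have hcross : ∏ a ∈ s, ∏ c ∈ insert x t, qDiff q a c =
        (∏ a ∈ s, qDiff q x a) * ∏ a ∈ s, ∏ c ∈ t, qDiff q a c := by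
      simp only [prod_insert hxt, prod_mul_distrib, qDiff_comm q _ x]
    rw [union_insert, qVandermonde_insert q (by simp [hxs, hxt]), qVandermonde_insert q hxt,
      ih (h.mono_right (subset_insert x t)), prod_union (h.mono_right (subset_insert x t)), hcross]
    ring

lemma prod_prod_erase_qDiff (s : Finset ℕ) :
    ∏ a ∈ s, ∏ c ∈ s.erase a, qDiff q a c = qVandermonde q s ^ 2 := by
  have hrow : ∀ a ∈ s, ∏ c ∈ s.erase a, qDiff q a c =
      (∏ c ∈ s with c < a, (q ^ a - q ^ c)) * ∏ c ∈ s with a < c, (q ^ c - q ^ a) := by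
    intro a _
    rw [prod_qDiff_of_notMem q (notMem_erase a s), filter_erase, filter_erase,
      erase_eq_of_notMem (by simp), erase_eq_of_notMem (by simp)]
  rw [prod_congr rfl hrow, prod_mul_distrib, sq, qVandermonde]
  congr 1
  exact prod_comm' fun a c => by simp only [mem_filter]; tauto

lemma qVandermonde_mul_prod_erase_qDiff {s t : Finset ℕ} (h : Disjoint s t) :
    qVandermonde q t * ∏ a ∈ s, ∏ c ∈ (s ∪ t).erase a, qDiff q a c =
      qVandermonde q (s ∪ t) * qVandermonde q s := by
  have hrow : ∀ a ∈ s, ∏ c ∈ (s ∪ t).erase a, qDiff q a c =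
      (∏ c ∈ s.erase a, qDiff q a c) * ∏ c ∈ t, qDiff q a c := fun a ha => by
    rw [erase_union_distrib, erase_eq_of_notMem (disjoint_left.1 h ha),
      prod_union (h.mono_left (erase_subset a s))]
  rw [prod_congr rfl hrow, prod_mul_distrib, prod_prod_erase_qDiff, qVandermonde_union q h]
  ring

lemma prod_lt_pairs_eq_qVandermonde {k : ℕ} (g : Fin k → ℕ) (hg : StrictMono g) :
    ∏ p ∈ univ.filter (fun p : Fin k × Fin k => p.1 < p.2), (q ^ g p.2 - q ^ g p.1) =
      qVandermonde q (univ.image g) := by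
  have hlower : ∀ j, (univ.image g).filter (· < g j) = (univ.filter (· < j)).image g := by
    intro j
    ext x
    simp only [mem_filter, mem_image, mem_univ, true_and]
    constructor
    · rintro ⟨⟨i, rfl⟩, hlt⟩
      exact ⟨i, hg.lt_iff_lt.1 hlt, rfl⟩
    · rintro ⟨i, hlt, rfl⟩
      exact ⟨⟨i, rfl⟩, hg hlt⟩
  rw [prod_filter, ← univ_product_univ, prod_product_right, qVandermonde,
    prod_image fun i _ j _ h => hg.injective h]
  refine prod_congr rfl fun j _ => ?_
  rw [hlower, prod_image fun i _ j _ h => hg.injective h, prod_filter]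

end CommRing

section Field

variable {K : Type*} [Field K] (q : K)

lemma qPoch_ne_zero (hq : ∀ n : ℕ, 0 < n → q ^ n ≠ 1) (k : ℕ) : qPoch q q k ≠ 0 :=
  prod_ne_zero_iff.2 fun j _ => by
    rw [← pow_succ', sub_ne_zero]
    exact (hq (j + 1) j.succ_pos).symm

lemma prod_range_pow_succ_sub_one (k : ℕ) :
    ∏ j ∈ range k, (q ^ (j + 1) - 1) = (-1) ^ k * qPoch q q k := by
  rw [qPoch, ← card_range k, ← prod_const, card_range, ← prod_mul_distrib]
  exact prod_congr rfl fun j _ => by rw [pow_succ']; ring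

lemma prod_range_pow_sub_pow (a : ℕ) :
    ∏ c ∈ range a, (q ^ a - q ^ c) = (-1) ^ a * q ^ a.choose 2 * qPoch q q a := by
  have hfactor : ∀ c ∈ range a, q ^ a - q ^ c = q ^ c * (q ^ (a - 1 - c + 1) - 1) := by
    intro c hc
    rw [mul_sub, mul_one, ← pow_add]
    congr 2
    have := mem_range.1 hc
    omega
  -- the factors `q ^ (a - c) - 1` are those of `(q;q)_a` in reverse order
  rw [prod_congr rfl hfactor, prod_mul_distrib, prod_pow_eq_pow_sum, sum_range_id,
    ← Nat.choose_two_right, prod_range_reflect (fun j => q ^ (j + 1) - 1),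
    prod_range_pow_succ_sub_one]
  ring

lemma prod_Ico_pow_sub_pow {a n : ℕ} :
    ∏ c ∈ Ico (a + 1) n, (q ^ c - q ^ a) =
      (-1) ^ (n - 1 - a) * q ^ (a * (n - 1 - a)) * qPoch q q (n - 1 - a) := by
  have hfactor : ∀ t ∈ range (n - 1 - a), q ^ (a + 1 + t) - q ^ a = q ^ a * (q ^ (t + 1) - 1) :=
    fun t _ => by rw [mul_sub, mul_one, ← pow_add]; ring_nf
  rw [prod_Ico_eq_prod_range, show n - (a + 1) = n - 1 - a by omega, prod_congr rfl hfactor,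
    prod_mul_distrib, prod_const, card_range, prod_range_pow_succ_sub_one, ← pow_mul]
  ring

lemma prod_erase_range_qDiff {a n : ℕ} (ha : a < n) :
    ∏ c ∈ (range n).erase a, qDiff q a c =
      (-1) ^ (n - 1) * q ^ (a.choose 2 + a * (n - 1 - a)) *
        (qPoch q q a * qPoch q q (n - 1 - a)) := by
  have hsplit : (range n).erase a = range a ∪ Ico (a + 1) n := by
    ext c
    simp only [mem_erase, mem_range, mem_union, mem_Ico]
    omega
  have hdisj : Disjoint (range a) (Ico (a + 1) n) :=
    disjoint_left.2 fun c hc hc' => by simp only [mem_range, mem_Ico] at hc hc'; omega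
  have hsign : (-1 : K) ^ (n - 1) = (-1) ^ a * (-1) ^ (n - 1 - a) := by
    rw [← pow_add]
    congr 1
    omega
  rw [hsplit, prod_union hdisj,
    prod_congr rfl fun c hc => qDiff_of_lt q (mem_range.1 hc),
    prod_congr rfl fun c hc => qDiff_of_gt q (mem_Ico.1 hc).1,
    prod_range_pow_sub_pow, prod_Ico_pow_sub_pow, hsign, pow_add]
  ring

lemma qVandermonde_range (n : ℕ) :
    qVandermonde q (range n) =
      (-1) ^ n.choose 2 * q ^ n.choose 3 * ∏ j ∈ range n, qPoch q q j := by
  induction n with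
  | zero => simp [qVandermonde]
  | succ n ih =>
    rw [range_add_one, qVandermonde_insert q notMem_range_self, ih,
      prod_congr rfl fun c hc => qDiff_of_lt q (mem_range.1 hc), prod_range_pow_sub_pow,
      prod_insert notMem_range_self, Nat.choose_succ_succ, Nat.choose_succ_succ,
      Nat.choose_one_right]
    ring

lemma prod_image_prod_erase_range_qDiff {m n : ℕ} (l : Fin m → ℕ)
    (hl : Function.Injective l) (hlt : ∀ j, l j < n) :
    ∏ a ∈ univ.image l, ∏ c ∈ (range n).erase a, qDiff q a c =
      (-1) ^ ((n - 1) * m) * q ^ (∑ j, ((l j).choose 2 + l j * (n - 1 - l j))) *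
        ∏ j, (qPoch q q (l j) * qPoch q q (n - 1 - l j)) := by
  rw [prod_image fun i _ j _ h => hl h, prod_congr rfl fun j _ => prod_erase_range_qDiff q (hlt j),
    prod_mul_distrib, prod_mul_distrib, prod_const, card_univ, Fintype.card_fin, ← pow_mul,
    prod_pow_eq_pow_sum]

end Field

lemma choose_two_add_add_mul (b m : ℕ) :
    b.choose 2 + m.choose 2 + (b + m - 1) * m = (b + m).choose 2 + 2 * m.choose 2 := by
  rcases m with _ | m
  · simp
  · rw [show b + (m + 1) - 1 = b + m by omega]
    qify
    simp only [Nat.cast_choose_two]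
    push_cast
    ring

lemma neg_one_pow_choose_two_add {M : Type*} [Monoid M] [HasDistribNeg M] (b m : ℕ) :
    (-1 : M) ^ (b.choose 2 + m.choose 2) * (-1) ^ ((b + m - 1) * m) = (-1) ^ (b + m).choose 2 := by
  rw [← pow_add, choose_two_add_add_mul, pow_add, pow_mul, neg_one_sq, one_pow, mul_one]

lemma cast_choose_two_add_mul_sub {a n : ℕ} (ha : a < n) :
    ((a.choose 2 + a * (n - 1 - a) : ℕ) : ℤ) = -((2 - (n : ℤ)) * a + a.choose 2) := by
  qify [show a ≤ n - 1 by omega, show 1 ≤ n by omega]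
  simp only [Nat.cast_choose_two]
  ring

/-- Complementary-minor Vandermonde identity: if `l̂_1 < ⋯ < l̂_b` is the ordered
complement of `l_1 < ⋯ < l_m` in `{0,…,b+m-1}`, then
`∏_{i<j}(q^{l̂_j} − q^{l̂_i}) = (−1)^{C(b,2)+C(m,2)}
 q^{C(b+m,3)+(2−b−m)|l|+∑_j C(l_j,2)}
 [∏_{j=1}^{b+m}(q;q)_{j-1} / ∏_{j=1}^m (q;q)_{l_j}(q;q)_{b+m-1-l_j}]
 ∏_{i<j}(q^{l_j}−q^{l_i})`. -/
theorem complement_vandermonde {K : Type*} [Field K] (b m : ℕ) (q : K)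
    (hq0 : q ≠ 0) (hq : ∀ n : ℕ, 0 < n → q ^ n ≠ 1)
    (l : Fin m → ℕ) (lhat : Fin b → ℕ)
    (hl : StrictMono l) (hlhat : StrictMono lhat)
    (hcomp : Finset.image lhat Finset.univ =
      Finset.range (b + m) \ Finset.image l Finset.univ)
    (hlb : ∀ j, l j < b + m) :
    ∏ p ∈ Finset.univ.filter (fun p : Fin b × Fin b => p.1 < p.2),
        (q ^ lhat p.2 - q ^ lhat p.1) =
      (-1 : K) ^ (Nat.choose b 2 + Nat.choose m 2) *
        q ^ ((Nat.choose (b + m) 3 : ℤ) +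
              (2 - (b : ℤ) - (m : ℤ)) * (∑ j : Fin m, (l j : ℤ)) +
              ∑ j : Fin m, (Nat.choose (l j) 2 : ℤ)) *
        ((∏ j ∈ Finset.range (b + m), qPoch q q j) /
          ∏ j : Fin m, (qPoch q q (l j) * qPoch q q (b + m - 1 - l j))) *
        ∏ p ∈ Finset.univ.filter (fun p : Fin m × Fin m => p.1 < p.2),
          (q ^ l p.2 - q ^ l p.1) := by
  have hsub : univ.image l ⊆ range (b + m) := image_subset_iff.2 fun j _ => mem_range.2 (hlb j)
  have hdisj : Disjoint (univ.image l) (univ.image lhat) := hcomp ▸ disjoint_sdiff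
  have hunion : univ.image l ∪ univ.image lhat = range (b + m) := by
    rw [hcomp, union_sdiff_of_subset hsub]
  have key := qVandermonde_mul_prod_erase_qDiff q hdisj
  rw [hunion, prod_image_prod_erase_range_qDiff q l hl.injective hlb, qVandermonde_range] at key
  have hexp : q ^ ((Nat.choose (b + m) 3 : ℤ) + (2 - (b : ℤ) - (m : ℤ)) * (∑ j : Fin m, (l j : ℤ)) +
      ∑ j : Fin m, (Nat.choose (l j) 2 : ℤ)) =
      q ^ (b + m).choose 3 / q ^ (∑ j, ((l j).choose 2 + l j * (b + m - 1 - l j))) := by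
    rw [← zpow_natCast, ← zpow_natCast, ← zpow_sub₀ hq0, Nat.cast_sum,
      sum_congr rfl fun j _ => cast_choose_two_add_mul_sub (hlb j), mul_sum, sum_neg_distrib,
      sub_neg_eq_add, add_assoc, ← sum_add_distrib]
    push_cast
    ring_nf
  have hden : ∏ j, (qPoch q q (l j) * qPoch q q (b + m - 1 - l j)) ≠ 0 :=
    prod_ne_zero_iff.2 fun j _ => mul_ne_zero (qPoch_ne_zero q hq _) (qPoch_ne_zero q hq _)
  rw [← neg_one_pow_choose_two_add] at key
  rw [prod_lt_pairs_eq_qVandermonde q lhat hlhat, prod_lt_pairs_eq_qVandermonde q l hl, hexp,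
    eq_div_of_mul_eq (by simp [hq0, hden]) key]
  field_simp
end

section
/- For a nonnegative integer m, one has ∏_{j=1}^m (q;q)_{j-1} = H̃_{q²}((m−1)/2) · H̃_{q²}(m/2)² · H̃_{q²}((m+1)/2), where H̃_q(n) = ∏_{j=1}^n (q;q)_{j-1} for integer n ≥ 0 and H̃_q(n) = ∏_{j=1}^{n+1/2} (q^{1/2};q)_{j-1} for half-integer n ≥ −1/2. -/
open Finset

/-- `Htil s n2` is the modified q-hyperfactorial `H̃_{s²}(n2/2)`, where `s` plays the
role of the square root `(s²)^{1/2}` of the base. For even `n2` (integer argument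
`n = n2/2 ≥ 0`) it is `∏_{j=1}^n (s²;s²)_{j-1}`; for odd `n2` (half-odd-integer
argument `n = n2/2 ≥ -1/2`) it is `∏_{j=1}^{n+1/2} (s;s²)_{j-1}`. -/
def Htil {K : Type*} [Field K] (s : K) (n2 : ℤ) : K :=
  if n2 % 2 = 0 then ∏ j ∈ Finset.range (n2 / 2).toNat, qPoch (s ^ 2) (s ^ 2) j
  else ∏ j ∈ Finset.range ((n2 + 1) / 2).toNat, qPoch (s ^ 2) s j

lemma Htil_even {K : Type*} [Field K] (q : K) (k : ℕ) :
    Htil q (2 * (k : ℤ)) = ∏ j ∈ Finset.range k, qPoch (q ^ 2) (q ^ 2) j := by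
  unfold Htil
  rw [if_pos (by omega), show (2 * (k : ℤ) / 2).toNat = k by omega]

lemma Htil_odd {K : Type*} [Field K] (q : K) (k : ℕ) :
    Htil q (2 * (k : ℤ) - 1) = ∏ j ∈ Finset.range k, qPoch (q ^ 2) q j := by
  unfold Htil
  rw [if_neg (by omega), show ((2 * (k : ℤ) - 1 + 1) / 2).toNat = k by omega]

lemma qPoch_split_even {K : Type*} [Field K] (q : K) (k : ℕ) :
    qPoch q q (2 * k) = qPoch (q ^ 2) q k * qPoch (q ^ 2) (q ^ 2) k := by
  induction k with
  | zero => simp [qPoch]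
  | succ k ih =>
    have h : 2 * (k + 1) = (2 * k + 1) + 1 := by ring
    rw [h]
    unfold qPoch at *
    rw [Finset.prod_range_succ, Finset.prod_range_succ, Finset.prod_range_succ,
      Finset.prod_range_succ, ih]
    ring

lemma qPoch_split_odd {K : Type*} [Field K] (q : K) (k : ℕ) :
    qPoch q q (2 * k + 1) = qPoch (q ^ 2) q (k + 1) * qPoch (q ^ 2) (q ^ 2) k := by
  unfold qPoch
  rw [show 2 * k + 1 = (2 * k) + 1 from rfl, Finset.prod_range_succ,
    Finset.prod_range_succ]
  have := qPoch_split_even q k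
  unfold qPoch at this
  rw [this]
  ring

/-- `H̃_q(m) = H̃_{q²}((m−1)/2) · H̃_{q²}(m/2)² · H̃_{q²}((m+1)/2)`, where the square
root of `q²` is taken to be `q`. -/
theorem htilde_quadratic {K : Type*} [Field K] (q : K) (m : ℕ) :
    ∏ j ∈ Finset.range m, qPoch q q j =
      Htil q ((m : ℤ) - 1) * Htil q (m : ℤ) ^ 2 * Htil q ((m : ℤ) + 1) := by
  induction m with
  | zero =>
    have h0 : Htil q ((0 : ℕ) : ℤ) = 1 := by
      have := Htil_even q 0; simpa using this
    have h1 : Htil q (((0 : ℕ) : ℤ) - 1) = 1 := by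
      have := Htil_odd q 0; simpa using this
    have h2 : Htil q (((0 : ℕ) : ℤ) + 1) = 1 := by
      have := Htil_odd q 1
      simp only [Nat.cast_one] at this
      rw [show (((0:ℕ):ℤ) + 1) = 2 * (1:ℤ) - 1 by norm_num, this]
      simp [qPoch]
    rw [h0, h1, h2]; simp
  | succ m ih =>
    rw [Finset.prod_range_succ, ih]
    rcases Nat.even_or_odd m with ⟨k, hk⟩ | ⟨k, hk⟩
    · subst hk
      have e1 : ((k + k : ℕ) : ℤ) - 1 = 2 * (k : ℤ) - 1 := by push_cast; ring
      have e2 : ((k + k : ℕ) : ℤ) = 2 * (k : ℤ) := by push_cast; ring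
      have e3 : ((k + k : ℕ) : ℤ) + 1 = 2 * ((k + 1 : ℕ) : ℤ) - 1 := by push_cast; ring
      have e4 : ((k + k + 1 : ℕ) : ℤ) - 1 = 2 * (k : ℤ) := by push_cast; ring
      have e5 : ((k + k + 1 : ℕ) : ℤ) = 2 * ((k + 1 : ℕ) : ℤ) - 1 := by push_cast; ring
      have e6 : ((k + k + 1 : ℕ) : ℤ) + 1 = 2 * ((k + 1 : ℕ) : ℤ) := by push_cast; ring
      rw [e3, e1, e2, e6, e4, e5, Htil_odd, Htil_even, Htil_odd, Htil_even, show k + k = 2 * k by ring, qPoch_split_even,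
        Finset.prod_range_succ, Finset.prod_range_succ]
      ring
    · subst hk
      have e1 : ((2 * k + 1 : ℕ) : ℤ) - 1 = 2 * (k : ℤ) := by push_cast; ring
      have e2 : ((2 * k + 1 : ℕ) : ℤ) = 2 * ((k + 1 : ℕ) : ℤ) - 1 := by push_cast; ring
      have e3 : ((2 * k + 1 : ℕ) : ℤ) + 1 = 2 * ((k + 1 : ℕ) : ℤ) := by push_cast; ring
      have e4 : ((2 * k + 1 + 1 : ℕ) : ℤ) - 1 = 2 * ((k + 1 : ℕ) : ℤ) - 1 := by
        push_cast; ring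
      have e5 : ((2 * k + 1 + 1 : ℕ) : ℤ) = 2 * ((k + 1 : ℕ) : ℤ) := by push_cast; ring
      have e6 : ((2 * k + 1 + 1 : ℕ) : ℤ) + 1 = 2 * ((k + 2 : ℕ) : ℤ) - 1 := by
        push_cast; ring
      rw [e3, e1, e2, e6, e4, e5, Htil_even, Htil_odd, Htil_even, Htil_odd, qPoch_split_odd,
        show k + 2 = (k + 1) + 1 from rfl,
        Finset.prod_range_succ (f := fun j => qPoch (q ^ 2) q j) (n := k + 1),
        Finset.prod_range_succ (f := fun j => qPoch (q ^ 2) (q ^ 2) j) (n := k)]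
      ring
end

section
/- For nonnegative integers k and m and arbitrary integer l, ∏_{j=1}^k (−q^{l+j}; q)_m = (C_{k+l} C_{l+m})/(C_l C_{k+l+m}) · H̃_q^−(|l|) H̃_q^−(|k+l+m|) / (H̃_q^−(|k+l|) H̃_q^−(|l+m|)), where C_n = 1 for n ≥ 0 and C_n = 2^n q^{(n−n³)/6} for n < 0, and H̃_q^−(n) = H̃_{q²}(n)/H̃_q(n). -/
open Finset

/-- q-hyperfactorial `H̃_q(n) = ∏_{j=1}^n (q;q)_{j-1}`. -/
def HtN {K : Type*} [Field K] (q : K) (n : ℕ) : K :=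
  ∏ j ∈ Finset.range n, qPoch q q j

/-- `H̃_q^−(n) = H̃_{q²}(n)/H̃_q(n)`. -/
def HtNeg {K : Type*} [Field K] (q : K) (n : ℕ) : K :=
  HtN (q ^ 2) n / HtN q n

/-- `C_n = 1` for `n ≥ 0` and `C_n = 2^n q^{(n−n³)/6}` for `n < 0`. -/
def Cc {K : Type*} [Field K] (q : K) (n : ℤ) : K :=
  if 0 ≤ n then 1 else (2 : K) ^ n * q ^ ((n - n ^ 3) / 6)

/-! With `G n = H̃_q^−(|n|) / C_n`, everything follows from the three-term relation
`G n * G (n + 2) = (1 + q ^ (n + 1)) * G (n + 1) ^ 2` for all integers `n`: it makes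
`(−q^{n+1}; q)_m = G n G(n+m+1) / (G(n+1) G(n+m))` telescope in `m`, and then the product over
`j` telescopes as well. For `n ≥ 0` the relation comes from `H̃_q^−(n) = ∏_{j<n} (−q;q)_j`.
For `n ≤ −2` it reduces to the case `−n − 2`, because `C` satisfies
`C_{n−1} C_{n+1} q^n = C_n²` for `n < 0`; the case `n = −1` is a direct check. -/

section

variable {K : Type*} [Field K]

lemma qPoch_succ (q x : K) (n : ℕ) : qPoch q x (n + 1) = qPoch q x n * (1 - x * q ^ n) :=
  prod_range_succ _ _

lemma qPoch_ne_zero_s12 {q x : K} {n : ℕ} (h : ∀ i < n, x * q ^ i ≠ 1) : qPoch q x n ≠ 0 :=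
  prod_ne_zero_iff.mpr fun i hi => sub_ne_zero.mpr (h i (mem_range.mp hi)).symm

lemma qPoch_sq_sq (q : K) (n : ℕ) : qPoch (q ^ 2) (q ^ 2) n = qPoch q (-q) n * qPoch q q n := by
  rw [qPoch, qPoch, qPoch, ← prod_mul_distrib]
  exact prod_congr rfl fun i _ => by ring

lemma HtN_ne_zero {q : K} (hq : ∀ n : ℕ, 0 < n → q ^ n ≠ 1) (n : ℕ) : HtN q n ≠ 0 :=
  prod_ne_zero_iff.mpr fun j _ => qPoch_ne_zero_s12 fun i _ => by
    rw [← pow_succ']; exact hq _ i.succ_pos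

lemma HtNeg_eq_prod {q : K} (hq : ∀ n : ℕ, 0 < n → q ^ n ≠ 1) (n : ℕ) :
    HtNeg q n = ∏ j ∈ range n, qPoch q (-q) j := by
  rw [HtNeg, div_eq_iff (HtN_ne_zero hq n), HtN, HtN, ← prod_mul_distrib]
  exact prod_congr rfl fun j _ => qPoch_sq_sq q j

lemma HtNeg_ne_zero {q : K} (hq : ∀ n : ℕ, 0 < n → q ^ n ≠ 1 ∧ q ^ n ≠ -1) (n : ℕ) :
    HtNeg q n ≠ 0 := by
  rw [HtNeg_eq_prod fun n hn => (hq n hn).1]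
  refine prod_ne_zero_iff.mpr fun j _ => qPoch_ne_zero_s12 fun i _ h => (hq (i + 1) i.succ_pos).2 ?_
  rw [pow_succ']; linear_combination -h

lemma HtNeg_mul_HtNeg_add_two {q : K} (hq : ∀ n : ℕ, 0 < n → q ^ n ≠ 1) (n : ℕ) :
    HtNeg q n * HtNeg q (n + 2) = (1 + q ^ (n + 1)) * HtNeg q (n + 1) ^ 2 := by
  simp only [HtNeg_eq_prod hq, prod_range_succ, qPoch_succ]
  ring

lemma Cc_of_nonpos (q : K) {n : ℤ} (hn : n ≤ 0) : Cc q n = 2 ^ n * q ^ ((n - n ^ 3) / 6) := by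
  rcases hn.lt_or_eq with hn | rfl
  · exact if_neg hn.not_ge
  · simp [Cc]

lemma Cc_ne_zero {q : K} (hq0 : q ≠ 0) (h2 : (2 : K) ≠ 0) (n : ℤ) : Cc q n ≠ 0 := by
  unfold Cc
  split_ifs
  exacts [one_ne_zero, mul_ne_zero (zpow_ne_zero _ h2) (zpow_ne_zero _ hq0)]

lemma Cc_sub_one_mul_two {q : K} (hq0 : q ≠ 0) (h2 : (2 : K) ≠ 0) {n : ℤ} (hn : n ≤ 0) :
    Cc q (n - 1) * 2 = Cc q n * q ^ (n * (n - 1) / 2) := by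
  obtain ⟨t, ht⟩ := Int.even_mul_pred_self n
  have hexp : (n - 1 - (n - 1) ^ 3) / 6 = (n - n ^ 3) / 6 + n * (n - 1) / 2 := by
    rw [show n - 1 - (n - 1) ^ 3 = n - n ^ 3 + t * 6 by linear_combination 3 * ht,
      Int.add_mul_ediv_right _ _ (by norm_num : (6 : ℤ) ≠ 0), ht]
    omega
  rw [Cc_of_nonpos q hn, Cc_of_nonpos q (by omega), hexp, zpow_add₀ hq0, zpow_sub_one₀ h2]
  field_simp

lemma Cc_sub_one_mul_Cc_add_one {q : K} (hq0 : q ≠ 0) (h2 : (2 : K) ≠ 0) {n : ℤ}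
    (hn : n < 0) : Cc q (n - 1) * Cc q (n + 1) * q ^ n = Cc q n ^ 2 := by
  have h₁ := Cc_sub_one_mul_two hq0 h2 hn.le
  have h₂ := Cc_sub_one_mul_two hq0 h2 (n := n + 1) hn
  have hexp : (n + 1) * n / 2 = n * (n - 1) / 2 + n := by
    rw [show (n + 1) * n = n * (n - 1) + n * 2 by ring, Int.add_mul_ediv_right _ _ two_ne_zero]
  rw [add_sub_cancel_right, hexp, zpow_add₀ hq0] at h₂
  refine mul_left_cancel₀ (mul_ne_zero h2 (zpow_ne_zero (n * (n - 1) / 2) hq0)) ?_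
  linear_combination (Cc q (n + 1) * q ^ (n * (n - 1) / 2) * q ^ n) * h₁
    - (Cc q n * q ^ (n * (n - 1) / 2)) * h₂

lemma qPoch_neg_zpow_of_rec {q : K} {G : ℤ → K} (hq0 : q ≠ 0) (hG : ∀ n, G n ≠ 0)
    (hrec : ∀ n, G n * G (n + 2) = (1 + q ^ (n + 1)) * G (n + 1) ^ 2) (n : ℤ) (m : ℕ) :
    qPoch q (-q ^ (n + 1)) m = G n * G (n + m + 1) / (G (n + 1) * G (n + m)) := by
  induction m with
  | zero =>
    rw [Nat.cast_zero, add_zero, qPoch, prod_range_zero, mul_comm,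
      div_self (mul_ne_zero (hG _) (hG _))]
  | succ m ih =>
    have hfactor : 1 - -q ^ (n + 1) * q ^ m = G (n + m) * G (n + m + 2) / G (n + m + 1) ^ 2 := by
      rw [eq_div_iff (pow_ne_zero 2 (hG _)), hrec, ← zpow_natCast, neg_mul, ← zpow_add₀ hq0]
      ring_nf
    rw [qPoch_succ, ih, hfactor, Nat.cast_succ, ← add_assoc,
      show n + m + 1 + 1 = n + m + 2 by ring]
    field_simp [hG]

lemma prod_qPoch_neg_zpow_of_rec {q : K} {G : ℤ → K} (hq0 : q ≠ 0) (hG : ∀ n, G n ≠ 0)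
    (hrec : ∀ n, G n * G (n + 2) = (1 + q ^ (n + 1)) * G (n + 1) ^ 2) (l : ℤ) (k m : ℕ) :
    ∏ j ∈ range k, qPoch q (-q ^ (l + j + 1)) m =
      G l * G (l + k + m) / (G (l + k) * G (l + m)) := by
  induction k with
  | zero =>
    rw [Nat.cast_zero, add_zero, prod_range_zero, mul_comm, div_self (mul_ne_zero (hG _) (hG _))]
  | succ k ih =>
    rw [prod_range_succ, ih, qPoch_neg_zpow_of_rec hq0 hG hrec, Nat.cast_succ, ← add_assoc l,
      add_right_comm _ 1 (m : ℤ)]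
    field_simp [hG]

def normHtNeg (q : K) (n : ℤ) : K := HtNeg q n.natAbs / Cc q n

lemma normHtNeg_natCast (q : K) (n : ℕ) : normHtNeg q n = HtNeg q n := by
  rw [normHtNeg, Int.natAbs_natCast, Cc, if_pos n.cast_nonneg, div_one]

lemma normHtNeg_neg_natCast (q : K) (n : ℕ) : normHtNeg q (-n) = HtNeg q n / Cc q (-n) := by
  rw [normHtNeg, Int.natAbs_neg, Int.natAbs_natCast]

lemma normHtNeg_ne_zero {q : K} (hq0 : q ≠ 0) (h2 : (2 : K) ≠ 0)
    (hq : ∀ n : ℕ, 0 < n → q ^ n ≠ 1 ∧ q ^ n ≠ -1) (n : ℤ) : normHtNeg q n ≠ 0 :=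
  div_ne_zero (HtNeg_ne_zero hq _) (Cc_ne_zero hq0 h2 n)

lemma normHtNeg_mul_normHtNeg_add_two {q : K} (hq0 : q ≠ 0) (h2 : (2 : K) ≠ 0)
    (hq : ∀ n : ℕ, 0 < n → q ^ n ≠ 1 ∧ q ^ n ≠ -1) (n : ℤ) :
    normHtNeg q n * normHtNeg q (n + 2) = (1 + q ^ (n + 1)) * normHtNeg q (n + 1) ^ 2 := by
  have hH := HtNeg_mul_HtNeg_add_two fun n hn => (hq n hn).1
  match n with
  | (p : ℕ) =>
    have := hH p
    simp only [← normHtNeg_natCast q] at this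
    exact_mod_cast this
  | -1 =>
    norm_num [normHtNeg, Cc, HtNeg_eq_prod fun n hn => (hq n hn).1, qPoch]
  | .negSucc (p + 1) =>
    have hC := Cc_sub_one_mul_Cc_add_one hq0 h2 (n := -(p + 1 : ℕ)) (by omega)
    rw [show -((p + 1 : ℕ) : ℤ) - 1 = -(p + 2 : ℕ) by omega,
      show -((p + 1 : ℕ) : ℤ) + 1 = -(p : ℕ) by omega] at hC
    rw [show Int.negSucc (p + 1) + 1 = -(p + 1 : ℕ) by omega,
      show Int.negSucc (p + 1) + 2 = -(p : ℕ) by omega,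
      show Int.negSucc (p + 1) = -(p + 2 : ℕ) by omega]
    simp only [normHtNeg_neg_natCast]
    have hinv : q ^ (p + 1) * q ^ (-(p + 1 : ℕ) : ℤ) = 1 := by
      rw [zpow_neg, zpow_natCast, mul_inv_cancel₀ (pow_ne_zero _ hq0)]
    field_simp [Cc_ne_zero hq0 h2, zpow_ne_zero _ hq0]
    linear_combination -(HtNeg q (p + 2) * HtNeg q p) * hC
      + (Cc q (-(p + 2 : ℕ)) * Cc q (-(p : ℕ)) * q ^ (-(p + 1 : ℕ) : ℤ)) * hH p
      + (Cc q (-(p + 2 : ℕ)) * Cc q (-(p : ℕ)) * HtNeg q (p + 1) ^ 2) * hinv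

end

/-- `∏_{j=1}^k (−q^{l+j};q)_m = (C_{k+l} C_{l+m})/(C_l C_{k+l+m})
   · H̃_q^−(|l|) H̃_q^−(|k+l+m|) / (H̃_q^−(|k+l|) H̃_q^−(|l+m|))`. -/
theorem htilde_neg_prod {K : Type*} [Field K] (q : K) (k m : ℕ) (l : ℤ)
    (hq0 : q ≠ 0) (h2 : (2 : K) ≠ 0)
    (hq : ∀ n : ℕ, 0 < n → q ^ n ≠ 1 ∧ q ^ n ≠ -1) :
    ∏ j ∈ Finset.range k, qPoch q (-(q ^ (l + (j : ℤ) + 1))) m =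
      (Cc q ((k : ℤ) + l) * Cc q (l + (m : ℤ))) /
          (Cc q l * Cc q ((k : ℤ) + l + (m : ℤ))) *
        (HtNeg q l.natAbs * HtNeg q ((k : ℤ) + l + (m : ℤ)).natAbs) /
        (HtNeg q ((k : ℤ) + l).natAbs * HtNeg q (l + (m : ℤ)).natAbs) := by
  rw [prod_qPoch_neg_zpow_of_rec hq0 (normHtNeg_ne_zero hq0 h2 hq)
    (normHtNeg_mul_normHtNeg_add_two hq0 h2 hq), add_comm (k : ℤ) l]
  simp only [normHtNeg, div_eq_mul_inv, mul_inv, inv_inv]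
  ring
end

section
/- Let a₁,…,a_n, b₁,…,b_n be nonnegative integers with ∑ a_j = ∑ b_j. Then there is a rational function f (independent of m) such that for every nonnegative even integer m, ∏_{k=1}^n H̃_q(a_k + m/2)/H̃_q(b_k + m/2) = f(q^{m/2}). -/
open Finset

noncomputable def polE {K : Type*} [Field K] (q : K) (c : ℕ) : Polynomial K :=
  ∏ i ∈ Finset.range c, ∏ t ∈ Finset.range i, (1 - Polynomial.C (q ^ (t + 1)) * Polynomial.X)

lemma polE_eval {K : Type*} [Field K] (q x : K) (c : ℕ) :
    Polynomial.eval x (polE q c) =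
      ∏ i ∈ Finset.range c, ∏ t ∈ Finset.range i, (1 - q ^ (t + 1) * x) := by
  simp [polE, Polynomial.eval_prod]

lemma qPoch_add_s16 {K : Type*} [Field K] (q : K) (M j : ℕ) :
    qPoch q q (M + j) = qPoch q q M * ∏ t ∈ Finset.range j, (1 - q ^ (t + 1) * q ^ M) := by
  unfold qPoch
  rw [Finset.prod_range_add]
  congr 1
  refine Finset.prod_congr rfl fun t _ => ?_
  rw [pow_add]
  ring

lemma HtN_add {K : Type*} [Field K] (q : K) (c M : ℕ) :
    HtN q (c + M) = HtN q M * ((qPoch q q M) ^ c *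
      ∏ i ∈ Finset.range c, ∏ t ∈ Finset.range i, (1 - q ^ (t + 1) * q ^ M)) := by
  unfold HtN
  rw [add_comm c M, Finset.prod_range_add]
  congr 1
  calc ∏ i ∈ Finset.range c, qPoch q q (M + i)
      = ∏ i ∈ Finset.range c, (qPoch q q M * ∏ t ∈ Finset.range i, (1 - q ^ (t + 1) * q ^ M)) :=
        Finset.prod_congr rfl fun i _ => qPoch_add_s16 q M i
    _ = _ := by rw [Finset.prod_mul_distrib, Finset.prod_const, Finset.card_range]

/-- If `∑ a_j = ∑ b_j`, there is a rational function `f` (a quotient of two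
polynomials over `K`, independent of `m`) such that for every even `m ≥ 0`,
`∏_k H̃_q(a_k + m/2)/H̃_q(b_k + m/2) = f(q^{m/2})`. -/
theorem htilde_ratio_rational {K : Type*} [Field K] (q : K)
    (hq0 : q ≠ 0) (hq : ∀ n : ℕ, 0 < n → q ^ n ≠ 1)
    (n : ℕ) (a b : Fin n → ℕ) (hsum : ∑ j, a j = ∑ j, b j) :
    ∃ p r : Polynomial K, r ≠ 0 ∧
      ∀ m : ℕ, m % 2 = 0 →
        Polynomial.eval (q ^ (m / 2)) r ≠ 0 ∧
        (∏ k : Fin n, HtN q (a k + m / 2) / HtN q (b k + m / 2)) =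
          Polynomial.eval (q ^ (m / 2)) p / Polynomial.eval (q ^ (m / 2)) r := by
  have hone : ∀ t M : ℕ, (1 : K) - q ^ (t + 1) * q ^ M ≠ 0 := by
    intro t M
    rw [← pow_add]
    intro h
    exact hq (t + 1 + M) (by omega) (sub_eq_zero.mp h).symm
  have hP : ∀ M : ℕ, qPoch q q M ≠ 0 := by
    intro M
    unfold qPoch
    rw [Finset.prod_ne_zero_iff]
    intro i _
    have := hone i 0
    simpa [pow_succ, mul_comm] using this
  have hH : ∀ M : ℕ, HtN q M ≠ 0 := by
    intro M
    unfold HtN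
    rw [Finset.prod_ne_zero_iff]
    exact fun i _ => hP i
  refine ⟨∏ k : Fin n, polE q (a k), ∏ k : Fin n, polE q (b k), ?_, ?_⟩
  · intro h
    have h0 : Polynomial.eval 0 (∏ k : Fin n, polE q (b k)) = 1 := by
      simp [Polynomial.eval_prod, polE_eval]
    rw [h] at h0
    simp at h0
  · intro m hm
    set M := m / 2 with hM
    have hevr : Polynomial.eval (q ^ M) (∏ k : Fin n, polE q (b k)) =
        ∏ k : Fin n, ∏ i ∈ Finset.range (b k), ∏ t ∈ Finset.range i, (1 - q ^ (t + 1) * q ^ M) := by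
      simp [Polynomial.eval_prod, polE_eval]
    have hevp : Polynomial.eval (q ^ M) (∏ k : Fin n, polE q (a k)) =
        ∏ k : Fin n, ∏ i ∈ Finset.range (a k), ∏ t ∈ Finset.range i, (1 - q ^ (t + 1) * q ^ M) := by
      simp [Polynomial.eval_prod, polE_eval]
    have hrne : Polynomial.eval (q ^ M) (∏ k : Fin n, polE q (b k)) ≠ 0 := by
      rw [hevr, Finset.prod_ne_zero_iff]
      intro k _
      rw [Finset.prod_ne_zero_iff]
      intro i _
      rw [Finset.prod_ne_zero_iff]
      exact fun t _ => hone t M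
    refine ⟨hrne, ?_⟩
    rw [hevp, hevr]
    have key : ∀ c : Fin n → ℕ,
        (∏ k : Fin n, HtN q (c k + M)) =
          (HtN q M) ^ n * (qPoch q q M) ^ (∑ k, c k) *
            ∏ k : Fin n, ∏ i ∈ Finset.range (c k), ∏ t ∈ Finset.range i,
              (1 - q ^ (t + 1) * q ^ M) := by
      intro c
      calc (∏ k : Fin n, HtN q (c k + M))
          = ∏ k : Fin n, (HtN q M * ((qPoch q q M) ^ (c k) *
              ∏ i ∈ Finset.range (c k), ∏ t ∈ Finset.range i, (1 - q ^ (t + 1) * q ^ M))) :=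
            Finset.prod_congr rfl fun k _ => HtN_add q (c k) M
        _ = _ := by
            rw [Finset.prod_mul_distrib, Finset.prod_mul_distrib, Finset.prod_const,
              Finset.prod_pow_eq_pow_sum, Finset.card_univ, Fintype.card_fin, mul_assoc]
    rw [Finset.prod_div_distrib, key a, key b, hsum]
    apply mul_div_mul_left
    exact mul_ne_zero (pow_ne_zero _ (hH M)) (pow_ne_zero _ (hP M))
end
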